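/- arXiv:2310.16235 — 9 statements merged into one kernel-verified Lean document; each statement's English description precedes it below -/
import Mathlib

section
/- Let h_- be a Hessenberg function on [n] with d+1 ≤ h_-(d) (so {d, d+1} is an edge of G_{h_-}), let τ = (d, d+1) be a transposition, and let d_0 < d with h_-(d_0) = d - 1 (so neither {d_0, d} nor {d_0, d+1} is an edge of G_{h_-}). For a coloring κ : [n] → ℙ, define asc(κ) = #{{i,j} ∈ E(G_{h_-}) : j < i, κ(j) < κ(i)}. Then for any coloring κ with κ(d_0) < κ(d) and κ(d_0) ≥ κ(d+1), the composed coloring κ∘τ satisfies asc(κ∘τ) = asc(κ) + 1. -/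
/-- `h` is a Hessenberg function on `[n] = {1, …, n}` (1-based). -/
def IsHessenberg (n : ℕ) (h : ℕ → ℕ) : Prop :=
  (∀ j, 1 ≤ j → j ≤ n → j ≤ h j ∧ h j ≤ n) ∧
  (∀ j k, 1 ≤ j → j ≤ k → k ≤ n → h j ≤ h k)

/-- The number of ascents of a coloring `κ` on `G_h`:
`asc(κ) = #{{i,j} ∈ E(G_h) : j < i, κ(j) < κ(i)}`. -/
def ascNum (n : ℕ) (h : ℕ → ℕ) (κ : ℕ → ℕ) : ℕ :=
  ((Finset.Icc 1 n ×ˢ Finset.Icc 1 n).filter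
    (fun p => p.2 < p.1 ∧ p.1 ≤ h p.2 ∧ κ p.2 < κ p.1)).card

/-- The transposition `τ = (d, d+1)` on `ℕ`. -/
def tau (d : ℕ) : ℕ → ℕ :=
  fun x => if x = d then d + 1 else if x = d + 1 then d else x

/-- If `κ(d₀) < κ(d)` and `κ(d₀) ≥ κ(d+1)`, then `asc(κ ∘ τ) = asc(κ) + 1`. -/
theorem asc_comp_tau (n d₀ d : ℕ) (hm : ℕ → ℕ)
    (hh : IsHessenberg n hm)
    (hd₀ : 1 ≤ d₀) (hd₀d : d₀ < d) (hdn : d < n)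
    (hedge : d + 1 ≤ hm d) (hcol : hm d = hm (d + 1))
    (hval : hm d₀ = d - 1)
    (hnone : ∀ j, 1 ≤ j → j ≤ n → hm j ≠ d)
    (κ : ℕ → ℕ) (hκ : ∀ i, 1 ≤ κ i)
    (hc1 : κ d₀ < κ d) (hc2 : κ (d + 1) ≤ κ d₀) :
    ascNum n hm (κ ∘ tau d) = ascNum n hm κ + 1 := by
  have hτinv : ∀ x, tau d (tau d x) = x := by
    intro x; unfold tau; split_ifs <;> omega
  have hτrange : ∀ x, 1 ≤ x → x ≤ n → 1 ≤ tau d x ∧ tau d x ≤ n := by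
    intro x h1 h2; unfold tau; split_ifs <;> omega
  have hτord : ∀ i j : ℕ, j < i → (i, j) ≠ (d + 1, d) → tau d j < tau d i := by
    intro i j hji hne
    have hne' : ¬(i = d + 1 ∧ j = d) := by
      intro ⟨h1, h2⟩; exact hne (by simp [h1, h2])
    unfold tau; split_ifs <;> omega
  have edd : tau d d = d + 1 := by unfold tau; rw [if_pos rfl]
  have edd1 : tau d (d + 1) = d := by unfold tau; rw [if_neg (by omega), if_pos rfl]
  have hedge_iff : ∀ i j : ℕ, 1 ≤ j → j ≤ n → j < i → (i, j) ≠ (d + 1, d) →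
      (i ≤ hm j ↔ tau d i ≤ hm (tau d j)) := by
    intro i j h1 h2 h5 h6
    have hne' : ¬(i = d + 1 ∧ j = d) := by
      intro ⟨ha, hb⟩; exact h6 (by simp [ha, hb])
    by_cases hjd : j = d
    · have hi : d + 2 ≤ i := by omega
      have e1 : tau d i = i := by unfold tau; rw [if_neg (by omega), if_neg (by omega)]
      have e2 : tau d j = d + 1 := by unfold tau; rw [if_pos hjd]
      rw [e1, e2, hjd, hcol]
    · by_cases hjd1 : j = d + 1
      · have hi : d + 2 ≤ i := by omega
        have e1 : tau d i = i := by unfold tau; rw [if_neg (by omega), if_neg (by omega)]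
        have e2 : tau d j = d := by unfold tau; rw [if_neg hjd, if_pos hjd1]
        rw [e1, e2, hjd1, ← hcol]
      · have e2 : tau d j = j := by unfold tau; rw [if_neg hjd, if_neg hjd1]
        rw [e2]
        by_cases hid : i = d
        · have e1 : tau d i = d + 1 := by unfold tau; rw [if_pos hid]
          rw [e1]
          have := hnone j h1 h2
          omega
        · by_cases hid1 : i = d + 1
          · have e1 : tau d i = d := by unfold tau; rw [if_neg hid, if_pos hid1]
            rw [e1]
            have := hnone j h1 h2
            omega
          · have e1 : tau d i = i := by unfold tau; rw [if_neg hid, if_neg hid1]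
            rw [e1]
  unfold ascNum
  set S := ((Finset.Icc 1 n ×ˢ Finset.Icc 1 n).filter
    (fun p => p.2 < p.1 ∧ p.1 ≤ hm p.2 ∧ (κ ∘ tau d) p.2 < (κ ∘ tau d) p.1)) with hS
  set T := ((Finset.Icc 1 n ×ˢ Finset.Icc 1 n).filter
    (fun p => p.2 < p.1 ∧ p.1 ≤ hm p.2 ∧ κ p.2 < κ p.1)) with hT
  have hmemS : ∀ p : ℕ × ℕ, p ∈ S ↔
      ((1 ≤ p.1 ∧ p.1 ≤ n) ∧ (1 ≤ p.2 ∧ p.2 ≤ n)) ∧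
      p.2 < p.1 ∧ p.1 ≤ hm p.2 ∧ κ (tau d p.2) < κ (tau d p.1) := by
    intro p
    rw [hS, Finset.mem_filter, Finset.mem_product, Finset.mem_Icc, Finset.mem_Icc]
    rfl
  have hmemT : ∀ p : ℕ × ℕ, p ∈ T ↔
      ((1 ≤ p.1 ∧ p.1 ≤ n) ∧ (1 ≤ p.2 ∧ p.2 ≤ n)) ∧
      p.2 < p.1 ∧ p.1 ≤ hm p.2 ∧ κ p.2 < κ p.1 := by
    intro p
    rw [hT, Finset.mem_filter, Finset.mem_product, Finset.mem_Icc, Finset.mem_Icc]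
  have hdd : ((d + 1 : ℕ), d) ∈ S := by
    rw [hmemS]
    refine ⟨⟨⟨by omega, by omega⟩, ⟨by omega, by omega⟩⟩, by omega, hedge, ?_⟩
    show κ (tau d d) < κ (tau d (d + 1))
    rw [edd, edd1]
    omega
  have hne_dd : ((d + 1 : ℕ), d) ∉ T := by
    rw [hmemT]
    rintro ⟨-, -, -, h⟩
    simp only at h
    omega
  have hcard : (S.erase (d + 1, d)).card = T.card := by
    apply Finset.card_bij (fun p _ => (tau d p.1, tau d p.2))
    · rintro ⟨i, j⟩ hp
      have hne := Finset.ne_of_mem_erase hp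
      have hpS := Finset.mem_of_mem_erase hp
      rw [hmemS] at hpS
      obtain ⟨⟨⟨hi1, hi2⟩, hj1, hj2⟩, hji, hij, hasc⟩ := hpS
      rw [hmemT]
      exact ⟨⟨hτrange i hi1 hi2, hτrange j hj1 hj2⟩,
        hτord i j hji hne, (hedge_iff i j hj1 hj2 hji hne).mp hij, hasc⟩
    · rintro ⟨i, j⟩ h1 ⟨i', j'⟩ h2 heq
      simp only [Prod.mk.injEq] at heq ⊢
      constructor
      · have := congrArg (tau d) heq.1; rwa [hτinv, hτinv] at this
      · have := congrArg (tau d) heq.2; rwa [hτinv, hτinv] at this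
    · rintro ⟨i, j⟩ hq
      rw [hmemT] at hq
      obtain ⟨⟨⟨hi1, hi2⟩, hj1, hj2⟩, hji, hij, hasc⟩ := hq
      simp only at hi1 hi2 hj1 hj2 hji hij hasc
      have hqne : ((i : ℕ), j) ≠ (d + 1, d) := by
        rintro heq
        apply hne_dd
        rw [← heq, hmemT]
        exact ⟨⟨⟨hi1, hi2⟩, hj1, hj2⟩, hji, hij, hasc⟩
      refine ⟨(tau d i, tau d j), ?_, by simp [hτinv]⟩
      have hpne : ((tau d i : ℕ), tau d j) ≠ (d + 1, d) := by
        intro heq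
        simp only [Prod.mk.injEq] at heq
        have h1 := congrArg (tau d) heq.1
        have h2 := congrArg (tau d) heq.2
        rw [hτinv] at h1 h2
        rw [edd1] at h1
        rw [edd] at h2
        omega
      apply Finset.mem_erase_of_ne_of_mem hpne
      rw [hmemS]
      refine ⟨⟨hτrange i hi1 hi2, hτrange j hj1 hj2⟩, hτord i j hji hqne, ?_, ?_⟩
      · exact (hedge_iff i j hj1 hj2 hji hqne).mp hij
      · show κ (tau d (tau d j)) < κ (tau d (tau d i))
        rw [hτinv, hτinv]; exact hasc
  have hins : S = insert (d + 1, d) (S.erase (d + 1, d)) :=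
    (Finset.insert_erase hdd).symm
  rw [hins, Finset.card_insert_of_notMem (Finset.notMem_erase _ _), hcard]
end

section
/- Unicellular LLT polynomials satisfy the modular law: for every modular triple (h_-, h, h_+) of Hessenberg functions on [n], (1+q)·LLT_h(z;q) = LLT_{h_+}(z;q) + q·LLT_{h_-}(z;q), where LLT_h(z;q) = Σ_{κ ∈ C(G_h)} z_κ q^{asc(κ)} is the sum over all colorings κ : [n] → ℙ of G_h, z_κ = z_{κ(1)}⋯z_{κ(n)}, and asc(κ) = #{{i,j} ∈ E(G_h) : j < i, κ(j) < κ(i)}. -/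
/-- `(hm, h, hp)` is a modular triple of type (C). -/
def TypeC (n : ℕ) (hm h hp : ℕ → ℕ) : Prop :=
  ∃ d₀ d, 1 ≤ d₀ ∧ d₀ < d ∧ d < n ∧ h d = h (d + 1) ∧
    (∀ j, 1 ≤ j → j ≤ n → (h j = d ↔ j = d₀)) ∧
    (∀ j, hm j = if j = d₀ then d - 1 else h j) ∧
    (∀ j, hp j = if j = d₀ then d + 1 else h j)

/-- `(hm, h, hp)` is a modular triple of type (R). -/
def TypeR (n : ℕ) (hm h hp : ℕ → ℕ) : Prop :=
  ∃ d', 1 ≤ d' ∧ d' < n ∧ h d' + 1 = h (d' + 1) ∧ h (d' + 1) ≠ d' + 1 ∧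
    (∀ j, 1 ≤ j → j ≤ n → h j ≠ d') ∧
    (∀ j, hm j = if j = d' + 1 then h d' else h j) ∧
    (∀ j, hp j = if j = d' then h d' + 1 else h j)

/-- `(hm, h, hp)` is a modular triple of Hessenberg functions on `[n]`. -/
def IsModularTriple (n : ℕ) (hm h hp : ℕ → ℕ) : Prop :=
  IsHessenberg n h ∧ (TypeC n hm h hp ∨ TypeR n hm h hp)

/-- The unicellular LLT polynomial `LLT_h(z; q) = Σ_{κ ∈ C(G_h)} z_κ q^{asc(κ)}`,
restricted to `N` variables (colorings `κ : [n] → [N]`); vertex `v : Fin n`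
represents `v + 1 ∈ [n]`, color `c : Fin N` has variable `z c`. -/
def llt (n N : ℕ) (h : ℕ → ℕ) {R : Type*} [CommRing R] (q : R) (z : Fin N → R) : R :=
  ∑ κ : Fin n → Fin N,
    (∏ i : Fin n, z (κ i)) *
      q ^ ((Finset.univ.filter (fun p : Fin n × Fin n =>
        (p.2 : ℕ) < (p.1 : ℕ) ∧ (p.1 : ℕ) + 1 ≤ h ((p.2 : ℕ) + 1) ∧ κ p.2 < κ p.1)).card)

/-!
Let `τ` swap the adjacent vertices `a`, `b = a + 1` of a modular triple. They are twins in
`G_{h₋}`, so `κ ↦ κ ∘ τ` preserves `z_κ` and the ascents on every edge other than `{a, b}`;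
moreover `G_h = G_{h₋} + P₁` and `G_{h₊} = G_h + P₂` with `P₂ = τ P₁`, so `κ ∘ τ` exchanges
the ascent indicators `y₁, y₂` of `P₁, P₂`. With `x = [κ a < κ b]`, the modular law says that
`Σ_κ z_κ q^(asc'(κ)) ((1 + q) q^(x + y₁) - q^(x + y₁ + y₂) - q^(x + 1))` vanishes, `asc'`
counting ascents off the three edges. Colorings with `κ a = κ b` are fixed by `τ` and
contribute `0`; the others cancel in pairs, because `κ a < κ b` forces `y₁ ≤ y₂`.
-/

open Finset

section Ascents

variable {α β : Type*} [LinearOrder β]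

def ascents (κ : α → β) (E : Finset (α × α)) : ℕ :=
  #{p ∈ E | κ p.2 < κ p.1}

lemma ascents_insert [DecidableEq α] (κ : α → β) {p : α × α} {E : Finset (α × α)} (hp : p ∉ E) :
    ascents κ (insert p E) = ascents κ E + if κ p.2 < κ p.1 then 1 else 0 := by
  unfold ascents
  rw [filter_insert]
  split_ifs
  · exact card_insert_of_notMem fun h => hp (mem_filter.1 h).1
  · rfl

lemma ascents_comp_of_involutive {σ : α → α} (hσ : Function.Involutive σ) {E : Finset (α × α)}
    (hE : ∀ p ∈ E, Prod.map σ σ p ∈ E) (κ : α → β) :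
    ascents (κ ∘ σ) E = ascents κ E := by
  have hσσ : Function.Involutive (Prod.map σ σ) := fun p => Prod.ext (hσ _) (hσ _)
  refine card_nbij' (Prod.map σ σ) (Prod.map σ σ) ?_ ?_ (fun p _ => hσσ p) (fun p _ => hσσ p)
  all_goals
    intro p hp
    simp only [coe_filter, Set.mem_ofPred_eq] at hp ⊢
    exact ⟨hE p hp.1, by simpa [hσ _] using hp.2⟩

end Ascents

lemma comp_swap_eq_self {α β : Type*} [DecidableEq α] {a b : α} {κ : α → β} (h : κ a = κ b) :
    κ ∘ Equiv.swap a b = κ := by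
  funext i
  rw [Function.comp_apply, Equiv.swap_apply_def]
  split_ifs <;> simp_all

section Modular

variable {α β R : Type*} [Fintype α] [DecidableEq α] [Fintype β] [LinearOrder β] [CommRing R]

def lltOfEdges (E : Finset (α × α)) (q : R) (z : β → R) : R :=
  ∑ κ : α → β, (∏ i, z (κ i)) * q ^ ascents κ E

lemma lltOfEdges_modular (q : R) (z : β → R) {E : Finset (α × α)} {a b : α} {P₁ P₂ : α × α}
    (hba : (b, a) ∈ E)
    (hE : ∀ p ∈ E.erase (b, a), Prod.map (Equiv.swap a b) (Equiv.swap a b) p ∈ E.erase (b, a))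
    (hP₁ : P₁ ∉ E) (hP₂ : P₂ ∉ insert P₁ E)
    (hswap : Prod.map (Equiv.swap a b) (Equiv.swap a b) P₁ = P₂)
    (hmono : ∀ κ : α → β, κ a < κ b → κ P₁.2 < κ P₁.1 → κ P₂.2 < κ P₂.1) :
    (1 + q) * lltOfEdges (insert P₁ E) q z =
      lltOfEdges (insert P₂ (insert P₁ E)) q z + q * lltOfEdges E q z := by
  set τ := Equiv.swap a b
  set E₀ := E.erase (b, a)
  have hE₀ : insert (b, a) E₀ = E := insert_erase hba
  have hτ : Function.Involutive τ := Equiv.swap_apply_self a b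
  let x (κ : α → β) : ℕ := if κ a < κ b then 1 else 0
  let y₁ (κ : α → β) : ℕ := if κ P₁.2 < κ P₁.1 then 1 else 0
  let y₂ (κ : α → β) : ℕ := if κ P₂.2 < κ P₂.1 then 1 else 0
  let w (κ : α → β) : R := (∏ i, z (κ i)) * q ^ ascents κ E₀
  let f (κ : α → β) : R :=
    w κ * ((1 + q) * q ^ (x κ + y₁ κ) - q ^ (x κ + y₁ κ + y₂ κ) - q ^ (x κ + 1))
  have hw : ∀ κ, w (κ ∘ τ) = w κ := fun κ => by
    simp only [w, ascents_comp_of_involutive hτ hE, Function.comp_apply]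
    rw [Equiv.prod_comp τ fun i => z (κ i)]
  have hy₁ : ∀ κ, y₁ (κ ∘ τ) = y₂ κ := fun κ => by simp [y₁, y₂, ← hswap, τ]
  have hy₂ : ∀ κ, y₂ (κ ∘ τ) = y₁ κ := fun κ => by
    simp [y₁, y₂, ← hswap, τ, Equiv.swap_apply_self]
  have hτa : ∀ κ : α → β, (κ ∘ τ) a = κ b := fun κ => congrArg κ (Equiv.swap_apply_left a b)
  have hτb : ∀ κ : α → β, (κ ∘ τ) b = κ a := fun κ => congrArg κ (Equiv.swap_apply_right a b)
  have hzero : ∀ κ, κ a = κ b → f κ = 0 := fun κ hab => by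
    have hy : y₁ κ = y₂ κ := by rw [← hy₁, comp_swap_eq_self hab]
    simp only [f, hy, x, y₂, hab, lt_irrefl, if_false]
    split_ifs <;> ring
  have hlt : ∀ κ, κ a < κ b → f κ + f (κ ∘ τ) = 0 := fun κ hab => by
    have hx : x (κ ∘ τ) = 0 := if_neg (by rw [hτa, hτb]; exact hab.not_gt)
    simp only [f, hw, hy₁, hy₂, hx]
    simp only [x, y₁, y₂, if_pos hab]
    split_ifs with h₁ h₂ <;> first | exact absurd (hmono κ hab h₁) h₂ | ring
  have hcancel : ∀ κ, f κ + f (κ ∘ τ) = 0 := fun κ => by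
    rcases lt_trichotomy (κ a) (κ b) with hab | hab | hab
    · exact hlt κ hab
    · rw [comp_swap_eq_self hab, hzero κ hab, add_zero]
    · have := hlt (κ ∘ τ) (by rwa [hτa, hτb])
      rwa [add_comm, Function.comp_assoc, hτ.comp_self, Function.comp_id] at this
  have hfix : ∀ κ, f κ ≠ 0 → κ ∘ τ ≠ κ := fun κ hf hκ =>
    hf (hzero κ ((hτb κ).symm.trans (congrFun hκ b)))
  have hsum : ∑ κ : α → β, f κ = 0 :=
    sum_ninvolution (· ∘ τ) hcancel hfix (fun _ => mem_univ _) fun κ =>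
      funext fun i => congrArg κ (hτ i)
  have hasc₀ : ∀ κ, ascents κ E = ascents κ E₀ + x κ := fun κ => by
    rw [← hE₀, ascents_insert κ (notMem_erase _ _)]
  rw [← sub_eq_zero, ← hsum]
  simp only [lltOfEdges, ascents_insert _ hP₂, ascents_insert _ hP₁, hasc₀, mul_sum,
    ← sum_add_distrib, ← sum_sub_distrib]
  refine sum_congr rfl fun κ _ => ?_
  simp only [f, w, x, y₁, y₂, pow_add]
  ring

end Modular

section Hessenberg

variable {n : ℕ}

def hessenbergEdges (n : ℕ) (h : ℕ → ℕ) : Finset (Fin n × Fin n) :=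
  {p | (p.2 : ℕ) < p.1 ∧ (p.1 : ℕ) + 1 ≤ h (p.2 + 1)}

@[simp]
lemma mem_hessenbergEdges {h : ℕ → ℕ} {p : Fin n × Fin n} :
    p ∈ hessenbergEdges n h ↔ (p.2 : ℕ) < p.1 ∧ (p.1 : ℕ) + 1 ≤ h (p.2 + 1) := by
  simp [hessenbergEdges]

lemma llt_eq_lltOfEdges (N : ℕ) (h : ℕ → ℕ) {R : Type*} [CommRing R] (q : R) (z : Fin N → R) :
    llt n N h q z = lltOfEdges (hessenbergEdges n h) q z := by
  simp only [llt, lltOfEdges, ascents, hessenbergEdges, filter_filter, and_assoc]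

lemma notMem_hessenbergEdges {g : ℕ → ℕ} {i c : Fin n} (hi : (i : ℕ) = g (c + 1)) :
    (i, c) ∉ hessenbergEdges n g := by
  simp [hi]

lemma hessenbergEdges_eq_insert {g g' : ℕ → ℕ} {i c : Fin n} (hi : (i : ℕ) = g (c + 1))
    (hci : c < i) (hc : g' (c + 1) = g (c + 1) + 1) (hother : ∀ j ≠ (c : ℕ) + 1, g' j = g j) :
    hessenbergEdges n g' = insert (i, c) (hessenbergEdges n g) := by
  ext ⟨x, y⟩
  simp only [mem_insert, mem_hessenbergEdges, Prod.mk.injEq, Fin.ext_iff]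
  rw [Fin.lt_def] at hci
  by_cases hy : (y : ℕ) = c
  · rw [hy, hc]
    omega
  · rw [hother _ (by omega)]
    omega

lemma map_swap_mem_erase_hessenbergEdges {g : ℕ → ℕ} {a b : Fin n} (hb : (b : ℕ) = a + 1)
    (hg : g (a + 1) = g (b + 1)) (hpre : ∀ j < (a : ℕ), g (j + 1) ≠ a + 1) {p : Fin n × Fin n}
    (hp : p ∈ (hessenbergEdges n g).erase (b, a)) :
    Prod.map (Equiv.swap a b) (Equiv.swap a b) p ∈ (hessenbergEdges n g).erase (b, a) := by
  obtain ⟨i, j⟩ := p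
  have hj := hpre j
  simp only [mem_erase, mem_hessenbergEdges, Prod.map, ne_eq, Prod.mk.injEq] at hp ⊢
  rw [Equiv.swap_apply_def, Equiv.swap_apply_def]
  split_ifs <;> subst_vars <;>
    simp only [Fin.ext_iff, and_self, not_true_eq_false, false_and] at * <;> omega

end Hessenberg

section ModularTriple

variable {n : ℕ} (N : ℕ) {R : Type*} [CommRing R] (q : R) (z : Fin N → R)

lemma llt_modular_of_adjacent_twins {hm h hp : ℕ → ℕ} {a b : Fin n} {P₁ P₂ : Fin n × Fin n}
    (hb : (b : ℕ) = a + 1) (hadj : (b : ℕ) + 1 ≤ hm (a + 1)) (htwin : hm (a + 1) = hm (b + 1))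
    (hpre : ∀ j < (a : ℕ), hm (j + 1) ≠ a + 1)
    (hE₁ : hessenbergEdges n h = insert P₁ (hessenbergEdges n hm))
    (hP₁ : P₁ ∉ hessenbergEdges n hm)
    (hE₂ : hessenbergEdges n hp = insert P₂ (hessenbergEdges n h))
    (hP₂ : P₂ ∉ hessenbergEdges n h)
    (hswap : Prod.map (Equiv.swap a b) (Equiv.swap a b) P₁ = P₂)
    (hmono : ∀ κ : Fin n → Fin N, κ a < κ b → κ P₁.2 < κ P₁.1 → κ P₂.2 < κ P₂.1) :
    (1 + q) * llt n N h q z = llt n N hp q z + q * llt n N hm q z := by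
  simp only [llt_eq_lltOfEdges, hE₂, hE₁]
  rw [hE₁] at hP₂
  refine lltOfEdges_modular q z ?_ (fun p hp => ?_) hP₁ hP₂ hswap hmono
  · exact mem_hessenbergEdges.2 ⟨hb ▸ Nat.lt_succ_self _, hadj⟩
  · exact map_swap_mem_erase_hessenbergEdges hb htwin hpre hp

lemma llt_modular_of_typeC {hm h hp : ℕ → ℕ} (hH : IsHessenberg n h) (hC : TypeC n hm h hp) :
    (1 + q) * llt n N h q z = llt n N hp q z + q * llt n N hm q z := by
  obtain ⟨d₀, d, hd₀, hd₀d, hdn, hdd, hfiber, hm_def, hp_def⟩ := hC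
  have hhd₀ : h d₀ = d := (hfiber d₀ hd₀ (by omega)).2 rfl
  have hd : d + 1 ≤ h (d + 1) := (hH.1 (d + 1) (by omega) (by omega)).1
  let a : Fin n := ⟨d - 1, by omega⟩
  let b : Fin n := ⟨d, hdn⟩
  let c : Fin n := ⟨d₀ - 1, by omega⟩
  have ha : (a : ℕ) + 1 = d := Nat.sub_add_cancel (by omega)
  have hb : (b : ℕ) = a + 1 := ha.symm
  have hc : (c : ℕ) + 1 = d₀ := Nat.sub_add_cancel hd₀
  have hca : c < a := Fin.lt_def.2 (by simp only [a, c]; omega)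
  have hcb : c < b := hca.trans (Fin.lt_def.2 (by simp only [a, b]; omega))
  have hmd : hm d = h (d + 1) := by rw [hm_def, if_neg (by omega), hdd]
  have hmc : hm (c + 1) = a := by rw [hc, hm_def, if_pos rfl]
  have hhc : h (c + 1) = b := by rw [hc, hhd₀]
  have htwin : hm (a + 1) = hm (b + 1) := by rw [ha, hmd, hm_def, if_neg (by omega)]
  have hpre : ∀ j < (a : ℕ), hm (j + 1) ≠ a + 1 := fun j hj => by
    rw [ha, hm_def]
    split_ifs with hj₀
    · omega
    · exact fun hjd => hj₀ ((hfiber (j + 1) (by omega) (by omega)).1 hjd)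
  have hE₁ : hessenbergEdges n h = insert (a, c) (hessenbergEdges n hm) :=
    hessenbergEdges_eq_insert hmc.symm hca (by rw [hmc, hhc, hb]) fun j hj => by
      rw [hm_def, if_neg (by omega)]
  have hE₂ : hessenbergEdges n hp = insert (b, c) (hessenbergEdges n h) :=
    hessenbergEdges_eq_insert hhc.symm hcb (by rw [hhc, hc, hp_def, if_pos rfl]) fun j hj => by
      rw [hp_def, if_neg (by omega)]
  have hswap : Prod.map (Equiv.swap a b) (Equiv.swap a b) (a, c) = (b, c) := by
    simp [Equiv.swap_apply_of_ne_of_ne hca.ne hcb.ne]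
  exact llt_modular_of_adjacent_twins N q z hb (by rw [ha, hmd]; exact hd) htwin hpre
    hE₁ (notMem_hessenbergEdges hmc.symm) hE₂ (notMem_hessenbergEdges hhc.symm) hswap
    fun κ hab hca => hca.trans hab

lemma llt_modular_of_typeR {hm h hp : ℕ → ℕ} (hH : IsHessenberg n h) (hR : TypeR n hm h hp) :
    (1 + q) * llt n N h q z = llt n N hp q z + q * llt n N hm q z := by
  obtain ⟨d, hd, hdn, hsucc, hne, hfiber, hm_def, hp_def⟩ := hR
  have hbound := hH.1 (d + 1) (by omega) (by omega)
  let a : Fin n := ⟨d - 1, by omega⟩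
  let b : Fin n := ⟨d, hdn⟩
  let c : Fin n := ⟨h d, by omega⟩
  have ha : (a : ℕ) + 1 = d := Nat.sub_add_cancel hd
  have hbc : b < c := Fin.lt_def.2 (by simp only [b, c]; omega)
  have hac : a < c := (Fin.lt_def.2 (by simp only [a, b]; omega)).trans hbc
  have hmd : hm d = h d := by rw [hm_def, if_neg (by omega)]
  have hmb : hm (b + 1) = c := by rw [hm_def, if_pos rfl]
  have hha : h (a + 1) = c := by rw [ha]
  have hpre : ∀ j < (a : ℕ), hm (j + 1) ≠ a + 1 := fun j hj => by
    rw [ha, hm_def, if_neg (by omega)]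
    exact hfiber (j + 1) (by omega) (by omega)
  have hE₁ : hessenbergEdges n h = insert (c, b) (hessenbergEdges n hm) :=
    hessenbergEdges_eq_insert hmb.symm hbc (by rw [hmb]; exact hsucc.symm) fun j hj => by
      rw [hm_def, if_neg hj]
  have hE₂ : hessenbergEdges n hp = insert (c, a) (hessenbergEdges n h) :=
    hessenbergEdges_eq_insert hha.symm hac (by rw [hha, ha, hp_def, if_pos rfl]) fun j hj => by
      rw [hp_def, if_neg (by omega)]
  have hswap : Prod.map (Equiv.swap a b) (Equiv.swap a b) (c, b) = (c, a) := by
    simp [Equiv.swap_apply_of_ne_of_ne hac.ne' hbc.ne']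
  exact llt_modular_of_adjacent_twins N q z ha.symm
    (by rw [ha, hmd]; show d + 1 ≤ h d; omega) (by rw [ha, hmd, hmb]) hpre
    hE₁ (notMem_hessenbergEdges hmb.symm) hE₂ (notMem_hessenbergEdges hha.symm) hswap
    fun κ hab hbc => hab.trans hbc

end ModularTriple

/-- Unicellular LLT polynomials satisfy the modular law:
`(1+q)·LLT_h = LLT_{h₊} + q·LLT_{h₋}` for every modular triple. -/
theorem llt_modular_law {R : Type*} [CommRing R] (n N : ℕ) (hm h hp : ℕ → ℕ)
    (hmt : IsModularTriple n hm h hp) (q : R) (z : Fin N → R) :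
    (1 + q) * llt n N h q z = llt n N hp q z + q * llt n N hm q z := by
  obtain ⟨hH, hC | hR⟩ := hmt
  · exact llt_modular_of_typeC N q z hH hC
  · exact llt_modular_of_typeR N q z hH hR
end

section
/- Chromatic symmetric functions (graded by ascents) satisfy the modular law: for every modular triple (h_-, h, h_+) of Hessenberg functions on [n], (1+q)·csf_h(z;q) = csf_{h_+}(z;q) + q·csf_{h_-}(z;q), where csf_h(z;q) = Σ_{κ ∈ PC(G_h)} z_κ q^{asc(κ)} is the sum over proper colorings κ of G_h. -/
/-- The graded chromatic symmetric function
`csf_h(z; q) = Σ_{κ ∈ PC(G_h)} z_κ q^{asc(κ)}`, summed over proper colorings,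
restricted to `N` variables (colorings `κ : [n] → [N]`); vertex `v : Fin n`
represents `v + 1 ∈ [n]`. -/
def csf (n N : ℕ) (h : ℕ → ℕ) {R : Type*} [CommRing R] (q : R) (z : Fin N → R) : R :=
  ∑ κ ∈ Finset.univ.filter (fun κ : Fin n → Fin N =>
      ∀ p : Fin n × Fin n, (p.2 : ℕ) < (p.1 : ℕ) → (p.1 : ℕ) + 1 ≤ h ((p.2 : ℕ) + 1) →
        κ p.2 ≠ κ p.1),
    (∏ i : Fin n, z (κ i)) *
      q ^ ((Finset.univ.filter (fun p : Fin n × Fin n =>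
        (p.2 : ℕ) < (p.1 : ℕ) ∧ (p.1 : ℕ) + 1 ≤ h ((p.2 : ℕ) + 1) ∧ κ p.2 < κ p.1)).card)

open Finset OrderDual

lemma prod_comp_of_involutive {V M : Type*} [CommMonoid M] (E : Finset (V × V)) {σ : V → V}
    (hσ : Function.Involutive σ) (hE : ∀ e ∈ E, (σ e.1, σ e.2) ∈ E) (f : V → V → M) :
    ∏ e ∈ E, f (σ e.1) (σ e.2) = ∏ e ∈ E, f e.1 e.2 :=
  prod_nbij' (fun e => (σ e.1, σ e.2)) (fun e => (σ e.1, σ e.2)) hE hE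
    (fun e _ => by simp [hσ _]) (fun e _ => by simp [hσ _]) (fun _ _ => rfl)

section Twins

variable {V : Type*} [DecidableEq V]

lemma swap_apply_mem_triple_iff {a b s : V} (hsa : s ≠ a) (hsb : s ≠ b) (x : V) :
    Equiv.swap a b x ∈ ({a, b, s} : Finset V) ↔ x ∈ ({a, b, s} : Finset V) := by
  simp only [mem_insert, mem_singleton, Equiv.swap_apply_eq_iff, Equiv.swap_apply_left,
    Equiv.swap_apply_right, Equiv.swap_apply_of_ne_of_ne hsa hsb]
  tauto

lemma swap_mem_of_twins {E : Finset (V × V)} {a b s : V}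
    (htwin : ∀ k ∉ ({a, b, s} : Finset V), ((k, a) ∈ E ↔ (k, b) ∈ E) ∧ ((a, k) ∈ E ↔ (b, k) ∈ E))
    {e : V × V} (he : e ∈ E)
    (hout : ¬(e.1 ∈ ({a, b, s} : Finset V) ∧ e.2 ∈ ({a, b, s} : Finset V))) :
    (Equiv.swap a b e.1, Equiv.swap a b e.2) ∈ E := by
  obtain ⟨u, v⟩ := e
  have hfix : ∀ k ∉ ({a, b, s} : Finset V), Equiv.swap a b k = k := fun k hk =>
    Equiv.swap_apply_of_ne_of_ne (fun h => hk (by simp [h])) (fun h => hk (by simp [h]))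
  rcases not_and_or.mp hout with hu | hv
  · rw [hfix u hu]
    rcases eq_or_ne v a with rfl | hva
    · simpa using (htwin u hu).1.mp he
    rcases eq_or_ne v b with rfl | hvb
    · simpa using (htwin u hu).1.mpr he
    rwa [Equiv.swap_apply_of_ne_of_ne hva hvb]
  · rw [hfix v hv]
    rcases eq_or_ne u a with rfl | hua
    · simpa using (htwin v hv).2.mp he
    rcases eq_or_ne u b with rfl | hub
    · simpa using (htwin v hv).2.mpr he
    rwa [Equiv.swap_apply_of_ne_of_ne hua hub]

lemma eq_insert_insert_filter_of_triangle {E : Finset (V × V)} {a b s : V}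
    (hE : ∀ u ∈ ({a, b, s} : Finset V), ∀ v ∈ ({a, b, s} : Finset V),
      (u, v) ∈ E ↔ (u, v) = (a, b) ∨ (u, v) = (b, s)) :
    E = insert (a, b) (insert (b, s)
      (E.filter fun e => ¬(e.1 ∈ ({a, b, s} : Finset V) ∧ e.2 ∈ ({a, b, s} : Finset V)))) := by
  set T : Finset V := {a, b, s}
  ext ⟨u, v⟩
  by_cases huv : u ∈ T ∧ v ∈ T
  · rw [hE u huv.1 v huv.2]
    simp [huv]
  · have hab : (u, v) ≠ (a, b) := by rintro ⟨⟩; simp [T] at huv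
    have hbs : (u, v) ≠ (b, s) := by rintro ⟨⟩; simp [T] at huv
    simp only [mem_insert, mem_filter, hab, hbs, huv, false_or, not_false_eq_true, and_true]

end Twins

section ColoringSum

variable {R C V : Type*} [CommRing R] [Fintype V] [DecidableEq V] [Fintype C]

/-- If `a, b, s` get colours `x, y, c`, the triangle `{a, b, s}` of `E`, `insert (a, s) E` and
`E.erase (b, s)` has weight `w x y * w y c`, `w x y * w y c * w x c` and `w x y`; this combines
them as in the modular law. -/
def modularDefect (w : C → C → R) (q : R) (x y c : C) : R :=
  w x y * ((1 + q) * w y c - w x c * w y c - q)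

def coloringSum (w : C → C → R) (z : C → R) (E : Finset (V × V)) : R :=
  ∑ κ : V → C, (∏ v, z (κ v)) * ∏ e ∈ E, w (κ e.1) (κ e.2)

lemma sum_mul_modularDefect_eq_zero (w : C → C → R) (q : R) (hw : ∀ x, w x x = 0)
    (hanti : ∀ x y c, modularDefect w q x y c + modularDefect w q y x c = 0)
    {a b s : V} (hsa : s ≠ a) (hsb : s ≠ b) (W : (V → C) → R)
    (hW : ∀ κ, W (κ ∘ Equiv.swap a b) = W κ) :
    ∑ κ : V → C, W κ * modularDefect w q (κ a) (κ b) (κ s) = 0 := by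
  refine sum_involution (fun κ _ => κ ∘ Equiv.swap a b) (fun κ _ => ?_) (fun κ _ hκ => ?_)
    (fun _ _ => mem_univ _) (fun κ _ => by ext; simp)
  · simp only [hW, Function.comp_apply, Equiv.swap_apply_left, Equiv.swap_apply_right,
      Equiv.swap_apply_of_ne_of_ne hsa hsb]
    rw [← mul_add, hanti, mul_zero]
  · intro hfix
    have : κ b = κ a := by simpa using congrFun hfix a
    simp [modularDefect, this, hw] at hκ

theorem coloringSum_modular_of_twins (w : C → C → R) (q : R) (z : C → R) (hw : ∀ x, w x x = 0)
    (hanti : ∀ x y c, modularDefect w q x y c + modularDefect w q y x c = 0)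
    {E : Finset (V × V)} {a b s : V} (hab : a ≠ b) (hsa : s ≠ a) (hsb : s ≠ b)
    (hE : ∀ u ∈ ({a, b, s} : Finset V), ∀ v ∈ ({a, b, s} : Finset V),
      (u, v) ∈ E ↔ (u, v) = (a, b) ∨ (u, v) = (b, s))
    (htwin : ∀ k ∉ ({a, b, s} : Finset V), ((k, a) ∈ E ↔ (k, b) ∈ E) ∧ ((a, k) ∈ E ↔ (b, k) ∈ E)) :
    (1 + q) * coloringSum w z E =
      coloringSum w z (insert (a, s) E) + q * coloringSum w z (E.erase (b, s)) := by
  set T : Finset V := {a, b, s}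
  set core := E.filter fun e => ¬(e.1 ∈ T ∧ e.2 ∈ T)
  have hE_eq : E = insert (a, b) (insert (b, s) core) := eq_insert_insert_filter_of_triangle hE
  have hT : a ∈ T ∧ b ∈ T ∧ s ∈ T := by simp [T]
  have hab_core : (a, b) ∉ core := by simp [core, hT]
  have hbs_core : (b, s) ∉ core := by simp [core, hT]
  have has_core : (a, s) ∉ core := by simp [core, hT]
  have hcore : ∀ e ∈ core, (Equiv.swap a b e.1, Equiv.swap a b e.2) ∈ core := by
    intro e he
    have hσT : ∀ x, Equiv.swap a b x ∈ T ↔ x ∈ T := swap_apply_mem_triple_iff hsa hsb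
    simp only [core, mem_filter, hσT] at he ⊢
    exact ⟨swap_mem_of_twins htwin he.1 he.2, he.2⟩
  set W : (V → C) → R := fun κ => (∏ v, z (κ v)) * ∏ e ∈ core, w (κ e.1) (κ e.2)
  have hW : ∀ κ : V → C, W (κ ∘ Equiv.swap a b) = W κ := fun κ => by
    simp only [W, Function.comp_apply]
    rw [Equiv.prod_comp (Equiv.swap a b) (fun v => z (κ v)),
      prod_comp_of_involutive core (Equiv.swap_apply_self a b) hcore fun x y => w (κ x) (κ y)]
  rw [← sub_eq_zero, ← sum_mul_modularDefect_eq_zero w q hw hanti hsa hsb _ hW]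
  simp only [coloringSum, mul_sum, ← sum_add_distrib, ← sum_sub_distrib]
  refine sum_congr rfl fun κ _ => ?_
  have hab_notin : (a, b) ∉ insert (b, s) core := by simp [hab, hab_core]
  have has_notin : (a, s) ∉ insert (a, b) (insert (b, s) core) := by simp [hab, hsb, has_core]
  rw [hE_eq, erase_insert_of_ne (show (a, b) ≠ (b, s) by simp [hab]), erase_insert hbs_core,
    prod_insert has_notin, prod_insert hab_notin, prod_insert hbs_core, prod_insert hab_core]
  simp only [modularDefect]
  ring

lemma coloringSum_map_prodComm (w : C → C → R) (z : C → R) (E : Finset (V × V)) :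
    coloringSum w z (E.map (Equiv.prodComm V V).toEmbedding) = coloringSum (flip w) z E := by
  simp [coloringSum, prod_map, flip]

theorem coloringSum_modular_of_twins' (w : C → C → R) (q : R) (z : C → R) (hw : ∀ x, w x x = 0)
    (hanti : ∀ x y c, modularDefect (flip w) q x y c + modularDefect (flip w) q y x c = 0)
    {E : Finset (V × V)} {a b s : V} (hab : a ≠ b) (hsa : s ≠ a) (hsb : s ≠ b)
    (hE : ∀ u ∈ ({a, b, s} : Finset V), ∀ v ∈ ({a, b, s} : Finset V),
      (u, v) ∈ E ↔ (u, v) = (b, a) ∨ (u, v) = (s, b))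
    (htwin : ∀ k ∉ ({a, b, s} : Finset V), ((k, a) ∈ E ↔ (k, b) ∈ E) ∧ ((a, k) ∈ E ↔ (b, k) ∈ E)) :
    (1 + q) * coloringSum w z E =
      coloringSum w z (insert (s, a) E) + q * coloringSum w z (E.erase (s, b)) := by
  set σ := (Equiv.prodComm V V).toEmbedding
  have hflip : ∀ F : Finset (V × V), coloringSum w z F = coloringSum (flip w) z (F.map σ) := by
    intro F
    rw [coloringSum_map_prodComm]
    rfl
  rw [hflip, hflip, hflip, map_insert, map_erase]
  refine coloringSum_modular_of_twins (flip w) q z hw hanti hab hsa hsb (fun u hu v hv => ?_)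
    (fun k hk => by simpa [σ, mem_map_equiv] using (htwin k hk).symm)
  simpa [σ, mem_map_equiv, and_comm] using hE v hv u hu

end ColoringSum

section EdgeWeight

variable {R C : Type*} [CommRing R] [LinearOrder C]

def edgeWeight (q : R) (x y : C) : R :=
  if x = y then 0 else if x < y then q else 1

@[simp]
lemma edgeWeight_self (q : R) (x : C) : edgeWeight q x x = 0 := if_pos rfl

lemma prod_edgeWeight {ι : Type*} (q : R) (s : Finset ι) (f g : ι → C) :
    ∏ i ∈ s, edgeWeight q (f i) (g i) =
      if ∀ i ∈ s, f i ≠ g i then q ^ #{i ∈ s | f i < g i} else 0 := by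
  split_ifs with hne
  · rw [prod_congr rfl fun i hi => show edgeWeight q (f i) (g i) = if f i < g i then q else 1 from
      if_neg (hne i hi), prod_ite, prod_const, prod_const_one, mul_one]
  · obtain ⟨i, hi, heq⟩ : ∃ i ∈ s, f i = g i := by simpa using hne
    exact prod_eq_zero hi (by simp [heq])

lemma modularDefect_edgeWeight_add_swap (q : R) (x y c : C) :
    modularDefect (edgeWeight q) q x y c + modularDefect (edgeWeight q) q y x c = 0 := by
  unfold modularDefect edgeWeight
  split_ifs <;> first | order | ring

lemma modularDefect_flip_edgeWeight_add_swap (q : R) (x y c : C) :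
    modularDefect (flip (edgeWeight q)) q x y c + modularDefect (flip (edgeWeight q)) q y x c =
      0 := by
  have hdual : flip (edgeWeight q) = fun x y : C => edgeWeight q (toDual x) (toDual y) := by
    funext x y
    simp [edgeWeight, flip, eq_comm]
  rw [hdual]
  exact modularDefect_edgeWeight_add_swap (C := Cᵒᵈ) q _ _ _

end EdgeWeight

section Hessenberg

variable {R : Type*} [CommRing R] {n : ℕ}

def hessEdges (n : ℕ) (h : ℕ → ℕ) : Finset (Fin n × Fin n) :=
  univ.filter fun e => e.1 < e.2 ∧ (e.2 : ℕ) + 1 ≤ h (e.1 + 1)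

@[simp]
lemma mem_hessEdges {h : ℕ → ℕ} {u v : Fin n} :
    (u, v) ∈ hessEdges n h ↔ u < v ∧ (v : ℕ) + 1 ≤ h (u + 1) := by
  simp [hessEdges]

lemma hessEdges_update_add_one {h : ℕ → ℕ} {i v : Fin n} (hv : (v : ℕ) = h (i + 1))
    (hiv : i < v) :
    hessEdges n (Function.update h (i + 1) (h (i + 1) + 1)) = insert (i, v) (hessEdges n h) := by
  ext ⟨x, y⟩
  simp only [mem_insert, mem_hessEdges, Prod.mk.injEq, Function.update_apply, Fin.ext_iff,
    Fin.lt_def]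
  rw [Fin.lt_def] at hiv
  split_ifs with hx
  · obtain rfl : x = i := Fin.ext (by omega)
    omega
  · omega

lemma hessEdges_update_pred {h : ℕ → ℕ} {i v : Fin n} (hv : (v : ℕ) + 1 = h (i + 1)) :
    hessEdges n (Function.update h (i + 1) v) = (hessEdges n h).erase (i, v) := by
  ext ⟨x, y⟩
  simp only [mem_erase, mem_hessEdges, ne_eq, Prod.mk.injEq, Function.update_apply, Fin.ext_iff,
    Fin.lt_def]
  split_ifs with hx
  · obtain rfl : x = i := Fin.ext (by omega)
    omega
  · omega

lemma csf_eq_coloringSum (N : ℕ) (h : ℕ → ℕ) (q : R) (z : Fin N → R) :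
    csf n N h q z = coloringSum (edgeWeight q) z (hessEdges n h) := by
  have hmap : hessEdges n h = (univ.filter fun p : Fin n × Fin n =>
      (p.2 : ℕ) < p.1 ∧ (p.1 : ℕ) + 1 ≤ h (p.2 + 1)).map (Equiv.prodComm _ _).toEmbedding := by
    ext ⟨u, v⟩
    simp [mem_map_equiv]
  rw [csf, coloringSum, sum_filter]
  refine sum_congr rfl fun κ _ => ?_
  rw [hmap, prod_map, prod_edgeWeight]
  simp [filter_filter, and_assoc]

theorem csf_modular_of_typeR (N : ℕ) {hm h hp : ℕ → ℕ} (hH : IsHessenberg n h)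
    (hR : TypeR n hm h hp) (q : R) (z : Fin N → R) :
    (1 + q) * csf n N h q z = csf n N hp q z + q * csf n N hm q z := by
  obtain ⟨d, hd1, hdn, hsucc, hne, hno, hhm, hhp⟩ := hR
  obtain ⟨c, rfl⟩ : ∃ c, d = c + 1 := ⟨d - 1, by omega⟩
  have hlow := (hH.1 (c + 1) (by omega) (by omega)).1
  have hup := (hH.1 (c + 1 + 1) (by omega) (by omega)).2
  -- the vertices `d'`, `d' + 1` and `h (d' + 1)` of `[n]`
  let a : Fin n := ⟨c, by omega⟩
  let b : Fin n := ⟨c + 1, hdn⟩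
  let s : Fin n := ⟨h (c + 1), by omega⟩
  have hp_eq : hp = Function.update h (a + 1) (h (a + 1) + 1) :=
    funext fun j => by simp [a, hhp, Function.update_apply]
  have hm_eq : hm = Function.update h (b + 1) s :=
    funext fun j => by simp [b, s, hhm, Function.update_apply]
  rw [csf_eq_coloringSum, csf_eq_coloringSum, csf_eq_coloringSum, hp_eq, hm_eq,
    hessEdges_update_add_one (v := s) rfl (by simp only [a, s, Fin.lt_def]; omega),
    hessEdges_update_pred (v := s) hsucc]
  have hdistinct : a ≠ b ∧ s ≠ a ∧ s ≠ b := by simp only [a, b, s, ne_eq, Fin.ext_iff]; omega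
  refine coloringSum_modular_of_twins (edgeWeight q) q z (edgeWeight_self q)
    (modularDefect_edgeWeight_add_swap q) hdistinct.1 hdistinct.2.1 hdistinct.2.2 ?_ ?_
  · simp only [mem_insert, mem_singleton]
    rintro u (rfl | rfl | rfl) v (rfl | rfl | rfl) <;>
      simp only [a, b, s, mem_hessEdges, Prod.mk.injEq, Fin.lt_def, Fin.ext_iff, or_true, true_or,
        iff_true] <;>
      omega
  · intro k hk
    have := hno (k + 1) (by omega) (by omega)
    simp only [a, b, s, mem_insert, mem_singleton, mem_hessEdges, Fin.lt_def,
      Fin.ext_iff] at hk ⊢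
    omega

theorem csf_modular_of_typeC (N : ℕ) {hm h hp : ℕ → ℕ} (hH : IsHessenberg n h)
    (hC : TypeC n hm h hp) (q : R) (z : Fin N → R) :
    (1 + q) * csf n N h q z = csf n N hp q z + q * csf n N hm q z := by
  obtain ⟨d₀, d, hd₀, hd₀d, hdn, heq, hiff, hhm, hhp⟩ := hC
  obtain ⟨c, rfl⟩ : ∃ c, d = c + 1 := ⟨d - 1, by omega⟩
  obtain ⟨e, rfl⟩ : ∃ e, d₀ = e + 1 := ⟨d₀ - 1, by omega⟩
  have hval : h (e + 1) = c + 1 := (hiff (e + 1) (by omega) (by omega)).2 rfl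
  have hlow : c + 2 ≤ h (c + 1) := by
    have := (hH.1 (c + 1) (by omega) (by omega)).1
    have := hiff (c + 1) (by omega) (by omega)
    omega
  -- the vertices `d + 1`, `d` and `d₀` of `[n]`
  let a : Fin n := ⟨c + 1, hdn⟩
  let b : Fin n := ⟨c, by omega⟩
  let s : Fin n := ⟨e, by omega⟩
  have hp_eq : hp = Function.update h (s + 1) (h (s + 1) + 1) :=
    funext fun j => by simp [s, hhp, hval, Function.update_apply]
  have hm_eq : hm = Function.update h (s + 1) b :=
    funext fun j => by simp [b, s, hhm, Function.update_apply]
  rw [csf_eq_coloringSum, csf_eq_coloringSum, csf_eq_coloringSum, hp_eq, hm_eq,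
    hessEdges_update_add_one (v := a) hval.symm (by simp only [a, s, Fin.lt_def]; omega),
    hessEdges_update_pred (v := b) hval.symm]
  have hdistinct : a ≠ b ∧ s ≠ a ∧ s ≠ b := by simp only [a, b, s, ne_eq, Fin.ext_iff]; omega
  refine coloringSum_modular_of_twins' (edgeWeight q) q z (edgeWeight_self q)
    (modularDefect_flip_edgeWeight_add_swap q) hdistinct.1 hdistinct.2.1 hdistinct.2.2 ?_ ?_
  · simp only [mem_insert, mem_singleton]
    rintro u (rfl | rfl | rfl) v (rfl | rfl | rfl) <;>
      simp only [a, b, s, mem_hessEdges, Prod.mk.injEq, Fin.lt_def, Fin.ext_iff, or_true, true_or,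
        iff_true] <;>
      omega
  · intro k hk
    have := hiff (k + 1) (by omega) (by omega)
    simp only [a, b, s, mem_insert, mem_singleton, mem_hessEdges, Fin.lt_def,
      Fin.ext_iff] at hk ⊢
    omega

end Hessenberg

/-- Chromatic symmetric functions satisfy the modular law:
`(1+q)·csf_h = csf_{h₊} + q·csf_{h₋}` for every modular triple. -/
theorem csf_modular_law {R : Type*} [CommRing R] (n N : ℕ) (hm h hp : ℕ → ℕ)
    (hmt : IsModularTriple n hm h hp) (q : R) (z : Fin N → R) :
    (1 + q) * csf n N h q z = csf n N hp q z + q * csf n N hm q z := by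
  obtain ⟨hH, hC | hR⟩ := hmt
  · exact csf_modular_of_typeC N hH hC q z
  · exact csf_modular_of_typeR N hH hR q z
end

section
/- For a Hessenberg function h on [n], the map Φ sending w ∈ S_n to w·τ, where τ = (d, d+1), is an isomorphism of labeled graphs from the GKM graph G_X(h) to the graph °G defined below; that is, {w, w(i,j)} is an edge of G_X(h) iff {wτ, w(i,j)τ} is an edge of °G, and the labels agree: both equal t_{w(i)} − t_{w(j)}. -/
open MvPolynomial

/-- The labeled edge set of the GKM graph `G_X(h)` (0-based conventions):
pairs (edge, label) with edge `{w, w·(i,j)}` for `j < i ≤ h(j)` and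
label `t_{w(i)} − t_{w(j)}`. -/
def labeledEdgesG (n : ℕ) (h : Fin n → Fin n) :
    Set (Sym2 (Equiv.Perm (Fin n)) × MvPolynomial (Fin n) ℂ) :=
  {e | ∃ (w : Equiv.Perm (Fin n)) (i j : Fin n), j < i ∧ i ≤ h j ∧
    e = (s(w, w * Equiv.swap i j), X (w i) - X (w j))}

/-- The labeled edge set of `°G`: edges `{°w, °w·(i,j)}` for `j < i ≤ h₋(j)` together
with the extra edges `{°w, °w·(d+1, d₀)}`, each labeled `t_{w(i)} − t_{w(j)}`. -/
def labeledEdgesOG (n : ℕ) (hm : Fin n → Fin n) (d₀ dp : Fin n) :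
    Set (Sym2 (Equiv.Perm (Fin n)) × MvPolynomial (Fin n) ℂ) :=
  {e | ∃ (w : Equiv.Perm (Fin n)) (i j : Fin n), j < i ∧
    (i ≤ hm j ∨ (i = dp ∧ j = d₀)) ∧
    e = (s(w, w * Equiv.swap i j), X (w i) - X (w j))}

section Aux

variable {n : ℕ}

/-- Flipping the witness: the same labeled edge arises from `(w·(i j), j, i)`. -/
lemma flip_edge (w : Equiv.Perm (Fin n)) (i j : Fin n) :
    s(w, w * Equiv.swap i j)
      = s(w * Equiv.swap i j, (w * Equiv.swap i j) * Equiv.swap j i) := by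
  rw [Equiv.swap_comm j i, mul_assoc, Equiv.swap_mul_self, mul_one, Sym2.eq_swap]

lemma flip_label (w : Equiv.Perm (Fin n)) (i j : Fin n) :
    (X (w i) - X (w j) : MvPolynomial (Fin n) ℂ)
      = X ((w * Equiv.swap i j) j) - X ((w * Equiv.swap i j) i) := by
  simp [Equiv.Perm.mul_apply]

/-- Symmetrized characterization of membership. -/
lemma mem_char (P : Fin n → Fin n → Prop) (e : Sym2 (Equiv.Perm (Fin n)))
    (α : MvPolynomial (Fin n) ℂ) :
    (∃ (w : Equiv.Perm (Fin n)) (i j : Fin n), P i j ∧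
        (e, α) = (s(w, w * Equiv.swap i j), X (w i) - X (w j))) ↔
    (∃ (w : Equiv.Perm (Fin n)) (i j : Fin n), (P i j ∨ P j i) ∧
        e = s(w, w * Equiv.swap i j) ∧ α = X (w i) - X (w j)) := by
  constructor
  · rintro ⟨w, i, j, hP, hEq⟩
    rw [Prod.ext_iff] at hEq
    exact ⟨w, i, j, Or.inl hP, hEq.1, hEq.2⟩
  · rintro ⟨w, i, j, (hP | hP), he, hα⟩
    · exact ⟨w, i, j, hP, by rw [he, hα]⟩
    · refine ⟨w * Equiv.swap i j, j, i, hP, ?_⟩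
      rw [Prod.ext_iff]
      exact ⟨by rw [he, flip_edge], by rw [hα, flip_label]⟩

lemma conj_swap (τ : Equiv.Perm (Fin n)) (hτ : τ * τ = 1) (w : Equiv.Perm (Fin n))
    (i j : Fin n) :
    (w * τ) * Equiv.swap (τ i) (τ j) = (w * Equiv.swap i j) * τ := by
  have h1 : Equiv.swap (τ i) (τ j) = τ * Equiv.swap i j * τ⁻¹ :=
    Equiv.swap_apply_apply τ i j
  have h2 : τ⁻¹ = τ := by
    rw [inv_eq_iff_mul_eq_one]; exact hτ
  rw [h1, h2]
  simp only [← mul_assoc]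
  rw [mul_assoc w τ τ, hτ, mul_one]

lemma map_edge (τ : Equiv.Perm (Fin n)) (hτ : τ * τ = 1) (w : Equiv.Perm (Fin n))
    (i j : Fin n) :
    Sym2.map (· * τ) s(w, w * Equiv.swap i j)
      = s(w * τ, (w * τ) * Equiv.swap (τ i) (τ j)) := by
  rw [Sym2.map_pair_eq, conj_swap τ hτ w i j]

lemma sym2_invol (τ : Equiv.Perm (Fin n)) (hτ : τ * τ = 1)
    (e : Sym2 (Equiv.Perm (Fin n))) :
    Sym2.map (· * τ) (Sym2.map (· * τ) e) = e := by
  induction e using Sym2.ind with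
  | _ a b => simp [mul_assoc, hτ]

end Aux

/-- Lemma 5.1 of the paper: `w ↦ °wτ`, `τ = (d, d+1)`, is an isomorphism of labeled
graphs from `G_X(h)` to `°G`: an edge with its label belongs to `G_X(h)` iff its image
under `Sym2.map (· * τ)` with the same label belongs to `°G`. -/
theorem labeledGraph_iso (n : ℕ) (h hm hp : Fin n → Fin n) (d₀ d dp dm : Fin n)
    (hmono : Monotone h) (hle : ∀ j, j ≤ h j)
    (hd₀d : d₀ < d) (hdp : (dp : ℕ) = (d : ℕ) + 1) (hdm : (dm : ℕ) + 1 = (d : ℕ))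
    (hcol : h d = h dp) (hinv : ∀ j, h j = d ↔ j = d₀)
    (hhm : hm = Function.update h d₀ dm) (hhp : hp = Function.update h d₀ dp) :
    ∀ (e : Sym2 (Equiv.Perm (Fin n))) (α : MvPolynomial (Fin n) ℂ),
      (e, α) ∈ labeledEdgesG n h ↔
      (e.map (fun w => w * Equiv.swap d dp), α) ∈ labeledEdgesOG n hm d₀ dp := by
  intro e α
  set τ : Equiv.Perm (Fin n) := Equiv.swap d dp with hτdef
  have hτ2 : τ * τ = 1 := Equiv.swap_mul_self d dp
  have hττ : ∀ x : Fin n, τ (τ x) = x := fun x => Equiv.swap_apply_self d dp x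
  -- basic facts
  have hd0d : d₀ ≠ d := ne_of_lt hd₀d
  have hvd0d : (d₀ : ℕ) < (d : ℕ) := hd₀d
  have hhd₀ : h d₀ = d := (hinv d₀).mpr rfl
  have hne : ∀ j : Fin n, j ≠ d₀ → (h j : ℕ) ≠ (d : ℕ) := by
    intro j hj hc
    exact hj ((hinv j).mp (Fin.ext hc))
  have hmd₀ : hm d₀ = dm := by rw [hhm]; simp
  have hmj : ∀ j : Fin n, j ≠ d₀ → hm j = h j := by
    intro j hj; rw [hhm, Function.update_of_ne hj]
  have hddp : d ≠ dp := by
    intro hc; rw [hc] at hdp; omega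
  have hτd : τ d = dp := Equiv.swap_apply_left d dp
  have hτdp : τ dp = d := Equiv.swap_apply_right d dp
  have hτfix : ∀ x : Fin n, x ≠ d → x ≠ dp → τ x = x := fun x h1 h2 =>
    Equiv.swap_apply_of_ne_of_ne h1 h2
  -- the local condition transfer
  set Q : Fin n → Fin n → Prop :=
    fun a b => b < a ∧ (a ≤ hm b ∨ (a = dp ∧ b = d₀)) with hQ
  have core : ∀ i j : Fin n, j < i → (i ≤ h j ↔ (Q (τ i) (τ j) ∨ Q (τ j) (τ i))) := by
    have vdp : (dp : ℕ) = (d : ℕ) + 1 := hdp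
    have vdm : (dm : ℕ) + 1 = (d : ℕ) := hdm
    have vcol : ((h d : Fin n) : ℕ) = ((h dp : Fin n) : ℕ) := congrArg Fin.val hcol
    have vd0 : (d₀ : ℕ) < (d : ℕ) := hvd0d
    have hdne : d ≠ d₀ := fun hc => by rw [hc] at vd0; omega
    have hdpne : dp ≠ d₀ := fun hc => by rw [← hc] at vd0; omega
    intro i j hji
    by_cases hid : i = d
    · rw [hid] at hji ⊢
      have hjd : j ≠ d := ne_of_lt hji
      have hjv : (j : ℕ) < (d : ℕ) := hji
      have hjdp : j ≠ dp := fun hc => by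
        have := congrArg Fin.val hc; omega
      rw [hτd, hτfix j hjd hjdp]
      by_cases hj0 : j = d₀
      · have v1 : ((h j : Fin n) : ℕ) = (d : ℕ) := by
          rw [hj0]; exact congrArg Fin.val hhd₀
        have v3 : (j : ℕ) = (d₀ : ℕ) := congrArg Fin.val hj0
        simp only [hQ, Fin.lt_def, Fin.le_def, Fin.ext_iff, true_and, and_true]
        omega
      · have v1 := hne j hj0
        have v2 : ((hm j : Fin n) : ℕ) = ((h j : Fin n) : ℕ) :=
          congrArg Fin.val (hmj j hj0)
        have v3 : (j : ℕ) ≠ (d₀ : ℕ) := fun hc => hj0 (Fin.ext hc)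
        simp only [hQ, Fin.lt_def, Fin.le_def, Fin.ext_iff, true_and, and_true]
        omega
    · by_cases hidp : i = dp
      · rw [hidp] at hji ⊢
        by_cases hjd : j = d
        · rw [hjd] at hji ⊢
          rw [hτdp, hτd]
          have v2 : ((hm d : Fin n) : ℕ) = ((h d : Fin n) : ℕ) :=
            congrArg Fin.val (hmj d hdne)
          have v3 : (d : ℕ) ≠ (d₀ : ℕ) := fun hc => hdne (Fin.ext hc)
          have v4 : (dp : ℕ) ≠ (d₀ : ℕ) := fun hc => hdpne (Fin.ext hc)
          simp only [hQ, Fin.lt_def, Fin.le_def, Fin.ext_iff, true_and, and_true]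
          omega
        · have hjdp : j ≠ dp := ne_of_lt hji
          have hjv : (j : ℕ) < (d : ℕ) := by
            have h1 : (j : ℕ) < (dp : ℕ) := hji
            have h2 : (j : ℕ) ≠ (d : ℕ) := fun hc => hjd (Fin.ext hc)
            omega
          rw [hτdp, hτfix j hjd hjdp]
          by_cases hj0 : j = d₀
          · have v1 : ((h j : Fin n) : ℕ) = (d : ℕ) := by
              rw [hj0]; exact congrArg Fin.val hhd₀
            have v2 : ((hm j : Fin n) : ℕ) = (dm : ℕ) := by
              rw [hj0]; exact congrArg Fin.val hmd₀
            have v3 : (j : ℕ) = (d₀ : ℕ) := congrArg Fin.val hj0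
            simp only [hQ, Fin.lt_def, Fin.le_def, Fin.ext_iff, true_and, and_true]
            omega
          · have v1 := hne j hj0
            have v2 : ((hm j : Fin n) : ℕ) = ((h j : Fin n) : ℕ) :=
              congrArg Fin.val (hmj j hj0)
            have v3 : (j : ℕ) ≠ (d₀ : ℕ) := fun hc => hj0 (Fin.ext hc)
            simp only [hQ, Fin.lt_def, Fin.le_def, Fin.ext_iff, true_and, and_true]
            omega
      · rw [hτfix i hid hidp]
        have hivd : (i : ℕ) ≠ (d : ℕ) := fun hc => hid (Fin.ext hc)
        have hivdp : (i : ℕ) ≠ (dp : ℕ) := fun hc => hidp (Fin.ext hc)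
        by_cases hjd : j = d
        · rw [hjd] at hji ⊢
          rw [hτd]
          have hiv : (d : ℕ) < (i : ℕ) := hji
          have v2 : ((hm dp : Fin n) : ℕ) = ((h dp : Fin n) : ℕ) :=
            congrArg Fin.val (hmj dp hdpne)
          have v4 : (dp : ℕ) ≠ (d₀ : ℕ) := fun hc => hdpne (Fin.ext hc)
          simp only [hQ, Fin.lt_def, Fin.le_def, Fin.ext_iff, true_and, and_true]
          omega
        · by_cases hjdp : j = dp
          · rw [hjdp] at hji ⊢
            rw [hτdp]
            have hiv : (dp : ℕ) < (i : ℕ) := hji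
            have v2 : ((hm d : Fin n) : ℕ) = ((h d : Fin n) : ℕ) :=
              congrArg Fin.val (hmj d hdne)
            have v3 : (d : ℕ) ≠ (d₀ : ℕ) := fun hc => hdne (Fin.ext hc)
            simp only [hQ, Fin.lt_def, Fin.le_def, Fin.ext_iff, true_and, and_true]
            omega
          · rw [hτfix j hjd hjdp]
            have hjv : (j : ℕ) < (i : ℕ) := hji
            by_cases hj0 : j = d₀
            · have v1 : ((h j : Fin n) : ℕ) = (d : ℕ) := by
                rw [hj0]; exact congrArg Fin.val hhd₀
              have v2 : ((hm j : Fin n) : ℕ) = (dm : ℕ) := by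
                rw [hj0]; exact congrArg Fin.val hmd₀
              have v3 : (j : ℕ) = (d₀ : ℕ) := congrArg Fin.val hj0
              simp only [hQ, Fin.lt_def, Fin.le_def, Fin.ext_iff, true_and, and_true]
              omega
            · have v1 := hne j hj0
              have v2 : ((hm j : Fin n) : ℕ) = ((h j : Fin n) : ℕ) :=
                congrArg Fin.val (hmj j hj0)
              have v3 : (j : ℕ) ≠ (d₀ : ℕ) := fun hc => hj0 (Fin.ext hc)
              simp only [hQ, Fin.lt_def, Fin.le_def, Fin.ext_iff, true_and, and_true]
              omega
  have key : ∀ i j : Fin n,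
      (((j < i ∧ i ≤ h j) ∨ (i < j ∧ j ≤ h i)) ↔ (Q (τ i) (τ j) ∨ Q (τ j) (τ i))) := by
    intro i j
    rcases lt_trichotomy j i with hlt | heq | hlt
    · have hco := core i j hlt
      constructor
      · rintro (⟨-, h2⟩ | ⟨h1, -⟩)
        · exact hco.mp h2
        · exact absurd h1 (lt_asymm hlt)
      · intro hq
        exact Or.inl ⟨hlt, hco.mpr hq⟩
    · subst heq
      rw [hQ]
      simp [lt_irrefl]
    · have hco := core j i hlt
      constructor
      · rintro (⟨h1, -⟩ | ⟨-, h2⟩)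
        · exact absurd h1 (lt_asymm hlt)
        · exact (or_comm).mp (hco.mp h2)
      · intro hq
        exact Or.inr ⟨hlt, hco.mpr ((or_comm).mp hq)⟩
  -- characterize both memberships
  have hG : (e, α) ∈ labeledEdgesG n h ↔
      ∃ (w : Equiv.Perm (Fin n)) (i j : Fin n),
        ((j < i ∧ i ≤ h j) ∨ (i < j ∧ j ≤ h i)) ∧
        e = s(w, w * Equiv.swap i j) ∧ α = X (w i) - X (w j) := by
    rw [show ((e, α) ∈ labeledEdgesG n h) ↔
        (∃ (w : Equiv.Perm (Fin n)) (i j : Fin n), (j < i ∧ i ≤ h j) ∧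
          (e, α) = (s(w, w * Equiv.swap i j), X (w i) - X (w j))) from by
      simp only [labeledEdgesG, Set.mem_setOf_eq, and_assoc]]
    exact mem_char _ e α
  have hOG : ((e.map (· * τ), α) ∈ labeledEdgesOG n hm d₀ dp) ↔
      ∃ (w : Equiv.Perm (Fin n)) (i j : Fin n),
        (Q i j ∨ Q j i) ∧
        e.map (· * τ) = s(w, w * Equiv.swap i j) ∧ α = X (w i) - X (w j) := by
    rw [show ((e.map (· * τ), α) ∈ labeledEdgesOG n hm d₀ dp) ↔
        (∃ (w : Equiv.Perm (Fin n)) (i j : Fin n), Q i j ∧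
          (e.map (· * τ), α) = (s(w, w * Equiv.swap i j), X (w i) - X (w j))) from by
      simp only [labeledEdgesOG, Set.mem_setOf_eq, hQ, and_assoc]]
    exact mem_char _ _ α
  rw [hG, hOG]
  constructor
  · rintro ⟨w, i, j, hP, he, hα⟩
    refine ⟨w * τ, τ i, τ j, (key i j).mp hP, ?_, ?_⟩
    · rw [he, map_edge τ hτ2]
    · rw [hα]
      simp only [Equiv.Perm.mul_apply, hττ]
  · rintro ⟨w, i, j, hQij, he, hα⟩
    refine ⟨w * τ, τ i, τ j, ?_, ?_, ?_⟩
    · apply (key (τ i) (τ j)).mpr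
      rwa [hττ, hττ]
    · have := congrArg (Sym2.map (· * τ)) he
      rw [sym2_invol τ hτ2] at this
      rw [this, map_edge τ hτ2]
    · rw [hα]
      simp only [Equiv.Perm.mul_apply, hττ]
end

section
/- The map ψ_! defined by ψ_!(f)(w) = (t_{w(d+1)} − t_{w(d)})·f(w) and ψ_!(f)(°w) = 0, for f ∈ H*_T(G), has image contained in H*_T(G̃, s). -/
open MvPolynomial

/-- The GKM graph cohomology of `X(h)` (0-based conventions): maps
`f : Sₙ → ℂ[t₁,…,tₙ]` with `f(w) − f(w·(i,j))` divisible by `t_{w(i)} − t_{w(j)}`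
for all edges `{w, w(i,j)}`, `j < i ≤ h(j)`. -/
def HTX (n : ℕ) (h : Fin n → Fin n) :
    Set (Equiv.Perm (Fin n) → MvPolynomial (Fin n) ℂ) :=
  {f | ∀ (w : Equiv.Perm (Fin n)) (i j : Fin n), j < i → i ≤ h j →
    (X (w i) - X (w j)) ∣ (f w - f (w * Equiv.swap i j))}

/-- The graph cohomology of `°G`: vertices `°w` for `w ∈ Sₙ`, edges `{°w, °w(i,j)}`
for `j < i ≤ h₋(j)` together with `{°w, °w(d+1, d₀)}`, labeled `t_{w(i)} − t_{w(j)}`. -/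
def HToG (n : ℕ) (hm : Fin n → Fin n) (d₀ dp : Fin n) :
    Set (Equiv.Perm (Fin n) → MvPolynomial (Fin n) ℂ) :=
  {f | ∀ (w : Equiv.Perm (Fin n)) (i j : Fin n), j < i →
    (i ≤ hm j ∨ (i = dp ∧ j = d₀)) →
    (X (w i) - X (w j)) ∣ (f w - f (w * Equiv.swap i j))}

/-- The graph cohomology `H*_T(G̃, s)` of the labeled graph `G̃` with sign `s`:
vertices `Sₙ ⊔ °Sₙ` (`Sum.inl w = w`, `Sum.inr w = °w`), edges of `G = G_X(h)`,
edges of `°G`, edges `{w, °w}` labeled `t_{w(d+1)} − t_{w(d)}`, together with the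
4-gon condition `f(w) − f(°w) + f(wτ) − f(°wτ) ≡ 0 mod (t_{w(d+1)} − t_{w(d)})²`,
where `τ = (d, d+1)`. -/
def HTtilde (n : ℕ) (h hm : Fin n → Fin n) (d₀ d dp : Fin n) :
    Set (Equiv.Perm (Fin n) ⊕ Equiv.Perm (Fin n) → MvPolynomial (Fin n) ℂ) :=
  {f | (∀ (w : Equiv.Perm (Fin n)) (i j : Fin n), j < i → i ≤ h j →
          (X (w i) - X (w j)) ∣ (f (Sum.inl w) - f (Sum.inl (w * Equiv.swap i j)))) ∧
       (∀ (w : Equiv.Perm (Fin n)) (i j : Fin n), j < i →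
          (i ≤ hm j ∨ (i = dp ∧ j = d₀)) →
          (X (w i) - X (w j)) ∣ (f (Sum.inr w) - f (Sum.inr (w * Equiv.swap i j)))) ∧
       (∀ w : Equiv.Perm (Fin n),
          (X (w dp) - X (w d)) ∣ (f (Sum.inl w) - f (Sum.inr w))) ∧
       (∀ w : Equiv.Perm (Fin n),
          (X (w dp) - X (w d)) ^ 2 ∣
            (f (Sum.inl w) - f (Sum.inr w)
              + f (Sum.inl (w * Equiv.swap d dp)) - f (Sum.inr (w * Equiv.swap d dp))))}

/-- The image of `ψ_! : H*_T(G) → Map(V(G̃), ℂ[t₁,…,tₙ])`,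
`ψ_!(f)(w) = (t_{w(d+1)} − t_{w(d)})·f(w)`, `ψ_!(f)(°w) = 0`,
is contained in `H*_T(G̃, s)`. -/
theorem psi_mem_HTtilde (n : ℕ) (h hm hp : Fin n → Fin n) (d₀ d dp dm : Fin n)
    (hmono : Monotone h) (hle : ∀ j, j ≤ h j)
    (hd₀d : d₀ < d) (hdp : (dp : ℕ) = (d : ℕ) + 1) (hdm : (dm : ℕ) + 1 = (d : ℕ))
    (hcol : h d = h dp) (hinv : ∀ j, h j = d ↔ j = d₀)
    (hhm : hm = Function.update h d₀ dm) (hhp : hp = Function.update h d₀ dp)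
    (f : Equiv.Perm (Fin n) → MvPolynomial (Fin n) ℂ) (hf : f ∈ HTX n h) :
    Sum.elim (fun w => (X (w dp) - X (w d)) * f w) (fun _ => 0)
      ∈ HTtilde n h hm d₀ d dp := by
  refine ⟨?_, ?_, ?_, ?_⟩
  · intro w i j hji hih
    have h1 : (X (w i) - X (w j) : MvPolynomial (Fin n) ℂ) ∣
        (f w - f (w * Equiv.swap i j)) := hf w i j hji hih
    have key : ∀ k : Fin n, (X (w i) - X (w j) : MvPolynomial (Fin n) ℂ) ∣
        (X (w k) - X ((w * Equiv.swap i j) k)) := by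
      intro k
      simp only [Equiv.Perm.mul_apply]
      rcases eq_or_ne k i with rfl | hki
      · rw [Equiv.swap_apply_left]
      · rcases eq_or_ne k j with rfl | hkj
        · rw [Equiv.swap_apply_right]
          exact ⟨-1, by ring⟩
        · rw [Equiv.swap_apply_of_ne_of_ne hki hkj]
          simp
    set w' := w * Equiv.swap i j with hw'
    simp only [Sum.elim_inl]
    have heq : (X (w dp) - X (w d)) * f w - (X (w' dp) - X (w' d)) * f w'
        = (X (w i) - X (w j)) * 0
          + ((X (w dp) - X (w d)) * (f w - f w')
          + ((X (w dp) - X (w' dp)) - (X (w d) - X (w' d))) * f w') := by ring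
    rw [heq]
    exact dvd_add (Dvd.intro 0 rfl)
      (dvd_add (h1.mul_left _) ((dvd_sub (key dp) (key d)).mul_right _))
  · intro w i j _ _
    simp
  · intro w
    simp only [Sum.elim_inl, Sum.elim_inr, sub_zero]
    exact dvd_mul_right _ _
  · intro w
    have hlt : d < dp := by
      rw [Fin.lt_def]; omega
    have hle' : dp ≤ h d := hcol ▸ hle dp
    have h1 : (X (w dp) - X (w d) : MvPolynomial (Fin n) ℂ) ∣
        (f w - f (w * Equiv.swap d dp)) := Equiv.swap_comm d dp ▸ hf w dp d hlt hle'
    simp only [Sum.elim_inl, Sum.elim_inr, sub_zero, Equiv.Perm.mul_apply,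
      Equiv.swap_apply_left, Equiv.swap_apply_right]
    have heq : (X (w dp) - X (w d)) * f w + (X (w d) - X (w dp)) * f (w * Equiv.swap d dp)
        = (X (w dp) - X (w d)) * (f w - f (w * Equiv.swap d dp)) := by ring
    rw [heq, sq]
    exact mul_dvd_mul_left _ h1
end

section
/- The map ρ_! defined by ρ_!(f)(w) = (t_{w(d)} − t_{w(d_0)})·f(w) and ρ_!(f)(°w) = (t_{w(d+1)} − t_{w(d_0)})·f(w), for f ∈ H*_T(G_-), has image contained in H*_T(G̃, s). -/
open MvPolynomial

lemma swap_dvd {n : ℕ} (w : Equiv.Perm (Fin n)) (i j a : Fin n) :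
    (X (w i) - X (w j) : MvPolynomial (Fin n) ℂ) ∣
      (X (w a) - X ((w * Equiv.swap i j) a)) := by
  rcases eq_or_ne a i with rfl | hai
  · simp [Equiv.Perm.mul_apply, Equiv.swap_apply_left]
  rcases eq_or_ne a j with rfl | haj
  · rw [Equiv.Perm.mul_apply, Equiv.swap_apply_right]
    exact dvd_sub_comm.mp dvd_rfl
  · simp [Equiv.Perm.mul_apply, Equiv.swap_apply_of_ne_of_ne hai haj]

/-- The image of `ρ_! : H*_T(G₋) → Map(V(G̃), ℂ[t₁,…,tₙ])`,
`ρ_!(f)(w) = (t_{w(d)} − t_{w(d₀)})·f(w)`, `ρ_!(f)(°w) = (t_{w(d+1)} − t_{w(d₀)})·f(w)`,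
is contained in `H*_T(G̃, s)`. -/
theorem rho_mem_HTtilde (n : ℕ) (h hm hp : Fin n → Fin n) (d₀ d dp dm : Fin n)
    (hmono : Monotone h) (hle : ∀ j, j ≤ h j)
    (hd₀d : d₀ < d) (hdp : (dp : ℕ) = (d : ℕ) + 1) (hdm : (dm : ℕ) + 1 = (d : ℕ))
    (hcol : h d = h dp) (hinv : ∀ j, h j = d ↔ j = d₀)
    (hhm : hm = Function.update h d₀ dm) (hhp : hp = Function.update h d₀ dp)
    (f : Equiv.Perm (Fin n) → MvPolynomial (Fin n) ℂ) (hf : f ∈ HTX n hm) :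
    Sum.elim (fun w => (X (w d) - X (w d₀)) * f w)
             (fun w => (X (w dp) - X (w d₀)) * f w)
      ∈ HTtilde n h hm d₀ d dp := by
  have hd₀ : h d₀ = d := (hinv d₀).mpr rfl
  have hdd₀ : d ≠ d₀ := (ne_of_lt hd₀d).symm
  have hddp : d < dp := by rw [Fin.lt_def]; omega
  have hd₀dp : d₀ < dp := lt_trans hd₀d hddp
  refine ⟨?_, ?_, ?_, ?_⟩
  · -- edges of G
    intro w i j hji hih
    have key : (Sum.elim (fun w => (X (w d) - X (w d₀)) * f w)
          (fun w => (X (w dp) - X (w d₀)) * f w) (Sum.inl w)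
        - Sum.elim (fun w => (X (w d) - X (w d₀)) * f w)
          (fun w => (X (w dp) - X (w d₀)) * f w) (Sum.inl (w * Equiv.swap i j)))
        = (X (w d) - X (w d₀)) * (f w - f (w * Equiv.swap i j))
          + ((X (w d) - X ((w * Equiv.swap i j) d))
             - (X (w d₀) - X ((w * Equiv.swap i j) d₀))) * f (w * Equiv.swap i j) := by
      simp only [Sum.elim_inl]; ring
    rw [key]
    refine dvd_add ?_ (Dvd.dvd.mul_right (dvd_sub (swap_dvd w i j d) (swap_dvd w i j d₀)) _)
    by_cases hj : j = d₀
    · by_cases hi : i = d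
      · rw [hi, hj]; exact dvd_mul_right _ _
      · have hle' : i ≤ hm j := by
          rw [hhm, hj, Function.update_self, Fin.le_def]
          have h1 : (i : ℕ) ≤ (d : ℕ) := by
            have := hih; rw [hj, hd₀] at this; exact this
          have h2 : (i : ℕ) ≠ (d : ℕ) := fun e => hi (Fin.ext e)
          omega
        exact Dvd.dvd.mul_left (hf w i j hji hle') _
    · have : i ≤ hm j := by rw [hhm, Function.update_of_ne hj]; exact hih
      exact Dvd.dvd.mul_left (hf w i j hji this) _
  · -- edges of °G
    intro w i j hji hor
    have key : (Sum.elim (fun w => (X (w d) - X (w d₀)) * f w)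
          (fun w => (X (w dp) - X (w d₀)) * f w) (Sum.inr w)
        - Sum.elim (fun w => (X (w d) - X (w d₀)) * f w)
          (fun w => (X (w dp) - X (w d₀)) * f w) (Sum.inr (w * Equiv.swap i j)))
        = (X (w dp) - X (w d₀)) * (f w - f (w * Equiv.swap i j))
          + ((X (w dp) - X ((w * Equiv.swap i j) dp))
             - (X (w d₀) - X ((w * Equiv.swap i j) d₀))) * f (w * Equiv.swap i j) := by
      simp only [Sum.elim_inr]; ring
    rw [key]
    refine dvd_add ?_ (Dvd.dvd.mul_right (dvd_sub (swap_dvd w i j dp) (swap_dvd w i j d₀)) _)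
    rcases hor with hih | ⟨hi, hj⟩
    · exact Dvd.dvd.mul_left (hf w i j hji hih) _
    · rw [hi, hj]; exact dvd_mul_right _ _
  · -- vertical edges
    intro w
    have key : (Sum.elim (fun w => (X (w d) - X (w d₀)) * f w)
          (fun w => (X (w dp) - X (w d₀)) * f w) (Sum.inl w)
        - Sum.elim (fun w => (X (w d) - X (w d₀)) * f w)
          (fun w => (X (w dp) - X (w d₀)) * f w) (Sum.inr w))
        = -((X (w dp) - X (w d)) * f w) := by
      simp only [Sum.elim_inl, Sum.elim_inr]; ring
    rw [key]
    exact dvd_neg.mpr (dvd_mul_right _ _)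
  · -- 4-gon condition
    intro w
    have h1 : (w * Equiv.swap d dp) d = w dp := by
      rw [Equiv.Perm.mul_apply, Equiv.swap_apply_left]
    have h2 : (w * Equiv.swap d dp) dp = w d := by
      rw [Equiv.Perm.mul_apply, Equiv.swap_apply_right]
    have h3 : (w * Equiv.swap d dp) d₀ = w d₀ := by
      rw [Equiv.Perm.mul_apply,
        Equiv.swap_apply_of_ne_of_ne (ne_of_lt hd₀d) (ne_of_lt hd₀dp)]
    have key : (Sum.elim (fun w => (X (w d) - X (w d₀)) * f w)
          (fun w => (X (w dp) - X (w d₀)) * f w) (Sum.inl w)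
        - Sum.elim (fun w => (X (w d) - X (w d₀)) * f w)
          (fun w => (X (w dp) - X (w d₀)) * f w) (Sum.inr w)
        + Sum.elim (fun w => (X (w d) - X (w d₀)) * f w)
          (fun w => (X (w dp) - X (w d₀)) * f w) (Sum.inl (w * Equiv.swap d dp))
        - Sum.elim (fun w => (X (w d) - X (w d₀)) * f w)
          (fun w => (X (w dp) - X (w d₀)) * f w) (Sum.inr (w * Equiv.swap d dp)))
        = -((X (w dp) - X (w d)) * (f w - f (w * Equiv.swap d dp))) := by
      simp only [Sum.elim_inl, Sum.elim_inr, h1, h2, h3]; ring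
    rw [key]
    apply dvd_neg.mpr
    rw [sq]
    refine mul_dvd_mul dvd_rfl ?_
    have hdphm : dp ≤ hm d := by
      rw [hhm, Function.update_of_ne hdd₀]
      calc dp ≤ h dp := hle dp
        _ = h d := hcol.symm
    have := hf w dp d hddp hdphm
    rwa [Equiv.swap_comm d dp]
end

section
/- Let G̃ and H*_T(G̃, s) be as in the paper's Section 4 for a modular triple of type (C). For any f̃ ∈ H*_T(G̃, s), define g : S_n → ℂ[t_1,...,t_n] by the equation (t_{w(d+1)} − t_{w(d)})·g(w) = f̃(w) − f̃(°wτ) (the right side is divisible by t_{w(d+1)} − t_{w(d)}). Then g ∈ H*_T(G), i.e. g(w) ≡ g(w(i,j)) mod (t_{w(i)} − t_{w(j)}) for all j < i ≤ h(j) and w ∈ S_n. -/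
open MvPolynomial

/-! Fix an edge `(i, j)` of `G` at `w`, put `σ = (i, j)`, `α = t_{w(d+1)} − t_{w(d)}` and
`β = t_{w(i)} − t_{w(j)}`. If `σ = τ`, then `α·(g(w) − g(wτ))` is the 4-gon expression, which is
divisible by `α²`, and `α` cancels. Otherwise `τ` carries `(i, j)` to an edge `(τ i, τ j)` of `°G`
at `wτ`, and `α·(g(w) − g(wσ))` is `f̃(w) − f̃(wσ) − (f̃(°wτ) − f̃(°wστ))` up to a multiple of
`α(w) − α(wσ)`, all three being divisible by `β`; as `β` is a prime not dividing `α`, it divides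
`g(w) − g(wσ)`. -/

open Equiv

namespace MvPolynomial

variable {σ R : Type*} [CommRing R]

theorem prime_X_sub_X [IsDomain R] {a b : σ} (hab : a ≠ b) :
    Prime (X a - X b : MvPolynomial σ R) := by
  classical
  let e : MvPolynomial σ R ≃ₐ[R] MvPolynomial σ R :=
    AlgEquiv.ofAlgHom (aeval (Function.update X a (X a - X b)))
      (aeval (Function.update X a (X a + X b)))
      (algHom_ext fun k => by rcases eq_or_ne k a with rfl | hk <;> simp [*, hab.symm])
      (algHom_ext fun k => by rcases eq_or_ne k a with rfl | hk <;> simp [*, hab.symm])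
  simpa [e] using (MulEquiv.prime_iff e).2 (X_prime (σ := σ) (R := R) (i := a))

theorem eq_or_eq_of_X_sub_X_dvd [Nontrivial R] {a b c e : σ} (hab : a ≠ b)
    (hdvd : (X a - X b : MvPolynomial σ R) ∣ X c - X e) :
    c = e ∨ s(c, e) = s(a, b) := by
  classical
  have := map_dvd (aeval (Function.update (X : σ → MvPolynomial σ R) a (X b))) hdvd
  simp only [map_sub, aeval_X, Function.update_self, Function.update_of_ne hab.symm, sub_self,
    zero_dvd_iff, sub_eq_zero] at this
  by_cases hc : c = a <;> by_cases he : e = a <;>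
    simp_all [Function.update_apply, X_injective.eq_iff, eq_comm]

end MvPolynomial

theorem sub_dvd_sub_swap {α R : Type*} [CommRing R] [DecidableEq α] (f : α → R) (i j k : α) :
    f i - f j ∣ f k - f (swap i j k) := by
  rw [swap_apply_def]
  split_ifs with hi hj
  · rw [hi]
  · rw [hj]; exact ⟨-1, by ring⟩
  · simp

theorem Equiv.mul_swap_mul_swap_swap_apply {α : Type*} [DecidableEq α] (w : Perm α) (a b i j : α) :
    w * swap a b * swap (swap a b i) (swap a b j) = w * swap i j * swap a b := by
  rw [swap_apply_apply, swap_inv]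
  simp only [mul_assoc, swap_mul_self_mul]

theorem swap_lt_swap_and_mem_edges_oG {n : ℕ} {h hm : Fin n → Fin n} {d₀ d dp dm : Fin n}
    (hd₀d : d₀ < d) (hdp : (dp : ℕ) = (d : ℕ) + 1) (hdm : (dm : ℕ) + 1 = (d : ℕ))
    (hcol : h d = h dp) (hinv : ∀ j, h j = d ↔ j = d₀)
    (hhm : hm = Function.update h d₀ dm) {i j : Fin n} (hji : j < i) (hij : i ≤ h j)
    (hne : ¬(i = dp ∧ j = d)) :
    swap d dp j < swap d dp i ∧
      (swap d dp i ≤ hm (swap d dp j) ∨ (swap d dp i = dp ∧ swap d dp j = d₀)) := by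
  have hj : (h j : ℕ) = d ↔ j = d₀ := by rw [← hinv j, Fin.val_eq_val]
  have hd₀ : (h d₀ : ℕ) = d := by rw [(hinv d₀).2 rfl]
  have hmd : hm d = h d := by rw [hhm, Function.update_of_ne hd₀d.ne']
  have hmdp : hm dp = h dp := by
    rw [hhm, Function.update_of_ne (by rw [ne_eq, Fin.ext_iff]; omega)]
  have hmj : j = d₀ ∧ hm j = dm ∨ j ≠ d₀ ∧ hm j = h j := by
    rcases eq_or_ne j d₀ with rfl | hjd₀ <;> simp [*]
  clear hhm hinv
  simp only [swap_apply_def]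
  split_ifs <;> subst_vars <;> (try rw [hmd]) <;> (try rw [hmdp]) <;> omega

section Quotient

variable {n : ℕ} {R : Type*} [CommRing R] [IsDomain R] {d dp : Fin n}
  {ft : Perm (Fin n) ⊕ Perm (Fin n) → MvPolynomial (Fin n) R}
  {g : Perm (Fin n) → MvPolynomial (Fin n) R}

theorem X_sub_X_dvd_sub_swap_of_fourGon (hd : d ≠ dp)
    (hg : ∀ w : Perm (Fin n),
      (X (w dp) - X (w d)) * g w = ft (Sum.inl w) - ft (Sum.inr (w * swap d dp)))
    (w : Perm (Fin n))
    (h4 : (X (w dp) - X (w d)) ^ 2 ∣ ft (Sum.inl w) - ft (Sum.inr w)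
      + ft (Sum.inl (w * swap d dp)) - ft (Sum.inr (w * swap d dp))) :
    X (w dp) - X (w d) ∣ g w - g (w * swap d dp) := by
  have hα : (X (w dp) - X (w d) : MvPolynomial (Fin n) R) ≠ 0 :=
    sub_ne_zero.2 (X_injective.ne (w.injective.ne hd.symm))
  have hgτ := hg (w * swap d dp)
  simp only [Perm.mul_apply, swap_apply_left, swap_apply_right, mul_swap_mul_self] at hgτ
  have hsum : (X (w dp) - X (w d)) * (g w - g (w * swap d dp)) =
      ft (Sum.inl w) - ft (Sum.inr w)
        + ft (Sum.inl (w * swap d dp)) - ft (Sum.inr (w * swap d dp)) := by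
    linear_combination hg w + hgτ
  rw [← mul_dvd_mul_iff_left hα, ← pow_two, hsum]
  exact h4

theorem X_sub_X_dvd_sub_swap_of_edges (hd : d ≠ dp)
    (hg : ∀ w : Perm (Fin n),
      (X (w dp) - X (w d)) * g w = ft (Sum.inl w) - ft (Sum.inr (w * swap d dp)))
    {w : Perm (Fin n)} {i j : Fin n} (hij : i ≠ j) (hne : s(i, j) ≠ s(dp, d))
    (hG : X (w i) - X (w j) ∣ ft (Sum.inl w) - ft (Sum.inl (w * swap i j)))
    (hoG : X (w i) - X (w j) ∣
      ft (Sum.inr (w * swap d dp)) - ft (Sum.inr (w * swap i j * swap d dp))) :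
    X (w i) - X (w j) ∣ g w - g (w * swap i j) := by
  have hprime : Prime (X (w i) - X (w j) : MvPolynomial (Fin n) R) :=
    prime_X_sub_X (w.injective.ne hij)
  have hα : ¬ X (w i) - X (w j) ∣ (X (w dp) - X (w d) : MvPolynomial (Fin n) R) := fun hdvd =>
    (eq_or_eq_of_X_sub_X_dvd (w.injective.ne hij) hdvd).elim (w.injective.ne hd.symm)
      fun hs => hne (Sym2.map.injective w.injective (by simpa only [Sym2.map_mk] using hs.symm))
  have hαw : X (w i) - X (w j) ∣ (X (w dp) - X (w d) : MvPolynomial (Fin n) R)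
      - (X ((w * swap i j) dp) - X ((w * swap i j) d)) := by
    rw [sub_sub_sub_comm]
    exact dvd_sub (sub_dvd_sub_swap (X ∘ w) i j dp) (sub_dvd_sub_swap (X ∘ w) i j d)
  have hsum : (X (w dp) - X (w d)) * (g w - g (w * swap i j)) =
      (ft (Sum.inl w) - ft (Sum.inl (w * swap i j)))
        - (ft (Sum.inr (w * swap d dp)) - ft (Sum.inr (w * swap i j * swap d dp)))
        - ((X (w dp) - X (w d)) - (X ((w * swap i j) dp) - X ((w * swap i j) d)))
          * g (w * swap i j) := by
    linear_combination hg w - hg (w * swap i j)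
  have hdvd := dvd_sub (dvd_sub hG hoG) (hαw.mul_right (g (w * swap i j)))
  rw [← hsum] at hdvd
  exact (hprime.dvd_or_dvd hdvd).resolve_left hα

end Quotient

theorem quotient_g_mem_HTX_general (n : ℕ) (h hm : Fin n → Fin n) (d₀ d dp dm : Fin n)
    (hd₀d : d₀ < d) (hdp : (dp : ℕ) = (d : ℕ) + 1) (hdm : (dm : ℕ) + 1 = (d : ℕ))
    (hcol : h d = h dp) (hinv : ∀ j, h j = d ↔ j = d₀)
    (hhm : hm = Function.update h d₀ dm)
    (ft : Equiv.Perm (Fin n) ⊕ Equiv.Perm (Fin n) → MvPolynomial (Fin n) ℂ)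
    (hft : ft ∈ HTtilde n h hm d₀ d dp)
    (g : Equiv.Perm (Fin n) → MvPolynomial (Fin n) ℂ)
    (hg : ∀ w : Equiv.Perm (Fin n),
      (X (w dp) - X (w d)) * g w = ft (Sum.inl w) - ft (Sum.inr (w * Equiv.swap d dp))) :
    g ∈ HTX n h := by
  obtain ⟨hG, hoG, -, h4⟩ := hft
  intro w i j hji hij
  have hddp : d < dp := Fin.lt_def.2 (by omega)
  by_cases hτ : i = dp ∧ j = d
  · obtain ⟨rfl, rfl⟩ := hτ
    rw [swap_comm]
    exact X_sub_X_dvd_sub_swap_of_fourGon hddp.ne hg w (h4 w)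
  · obtain ⟨hlt, hedge⟩ :=
      swap_lt_swap_and_mem_edges_oG hd₀d hdp hdm hcol hinv hhm hji hij hτ
    have hoGw := hoG (w * swap d dp) _ _ hlt hedge
    rw [mul_swap_mul_swap_swap_apply] at hoGw
    simp only [Perm.mul_apply, swap_apply_self] at hoGw
    refine X_sub_X_dvd_sub_swap_of_edges hddp.ne hg hji.ne' ?_ (hG w i j hji hij) hoGw
    rw [Ne, Sym2.eq_iff]
    rintro (hs | ⟨rfl, rfl⟩)
    · exact hτ hs
    · exact absurd hji hddp.not_gt

/-- For `f̃ ∈ H*_T(G̃, s)`, the element `g` defined by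
`(t_{w(d+1)} − t_{w(d)})·g(w) = f̃(w) − f̃(°wτ)` lies in `H*_T(G)`. -/
theorem quotient_g_mem_HTX (n : ℕ) (h hm hp : Fin n → Fin n) (d₀ d dp dm : Fin n)
    (hmono : Monotone h) (hle : ∀ j, j ≤ h j)
    (hd₀d : d₀ < d) (hdp : (dp : ℕ) = (d : ℕ) + 1) (hdm : (dm : ℕ) + 1 = (d : ℕ))
    (hcol : h d = h dp) (hinv : ∀ j, h j = d ↔ j = d₀)
    (hhm : hm = Function.update h d₀ dm) (hhp : hp = Function.update h d₀ dp)
    (ft : Equiv.Perm (Fin n) ⊕ Equiv.Perm (Fin n) → MvPolynomial (Fin n) ℂ)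
    (hft : ft ∈ HTtilde n h hm d₀ d dp)
    (g : Equiv.Perm (Fin n) → MvPolynomial (Fin n) ℂ)
    (hg : ∀ w : Equiv.Perm (Fin n),
      (X (w dp) - X (w d)) * g w = ft (Sum.inl w) - ft (Sum.inr (w * Equiv.swap d dp))) :
    g ∈ HTX n h :=
  quotient_g_mem_HTX_general n h hm d₀ d dp dm hd₀d hdp hdm hcol hinv hhm ft hft g hg
end

section
/- The homomorphism φ + ψ_! : H*_T(°G) ⊕ H*_T(G) → H*_T(G̃, s), (f, g) ↦ φ(f) + ψ_!(g), is an isomorphism of ℂ[t_1,...,t_n]-modules. -/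
open MvPolynomial

/-- The combined map `(f, g) ↦ φ(f) + ψ_!(g)`:
`(φ(f)+ψ_!(g))(w) = f(°wτ) + (t_{w(d+1)} − t_{w(d)})·g(w)`,
`(φ(f)+ψ_!(g))(°w) = f(°w)`. -/
noncomputable def phiPsi (n : ℕ) (d dp : Fin n)
    (f g : Equiv.Perm (Fin n) → MvPolynomial (Fin n) ℂ) :
    Equiv.Perm (Fin n) ⊕ Equiv.Perm (Fin n) → MvPolynomial (Fin n) ℂ :=
  Sum.elim (fun w => f (w * Equiv.swap d dp) + (X (w dp) - X (w d)) * g w)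
           (fun w => f w)


section AuxPhiPsi

variable {n : ℕ}

/-- Substitution `X b ↦ X a`, other variables fixed. -/
noncomputable def substAB (a b : Fin n) :
    MvPolynomial (Fin n) ℂ →ₐ[ℂ] MvPolynomial (Fin n) ℂ :=
  aeval (fun i => if i = b then X a else X i)

lemma substAB_dvd_sub (a b : Fin n) (p : MvPolynomial (Fin n) ℂ) :
    (X a - X b) ∣ (p - substAB a b p) := by
  induction p using MvPolynomial.induction_on with
  | C c => simp [substAB]
  | add p q hp hq =>
      rw [map_add]
      obtain ⟨c, hc⟩ := hp
      obtain ⟨e, he⟩ := hq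
      exact ⟨c + e, by linear_combination hc + he⟩
  | mul_X p i hp =>
      rw [map_mul]
      have hXi : substAB a b (X i : MvPolynomial (Fin n) ℂ)
          = if i = b then X a else X i := by simp [substAB]
      obtain ⟨c, hc⟩ := hp
      by_cases hib : i = b
      · subst hib
        rw [hXi, if_pos rfl]
        exact ⟨c * X i - substAB a i p,
          by linear_combination (X i : MvPolynomial (Fin n) ℂ) * hc⟩
      · rw [hXi, if_neg hib]
        exact ⟨c * X i, by linear_combination (X i : MvPolynomial (Fin n) ℂ) * hc⟩

lemma substAB_diff (a b : Fin n) :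
    substAB a b (X a - X b : MvPolynomial (Fin n) ℂ) = 0 := by
  simp [substAB]

lemma diff_dvd_iff {a b : Fin n} (p : MvPolynomial (Fin n) ℂ) :
    (X a - X b) ∣ p ↔ substAB a b p = 0 := by
  constructor
  · rintro ⟨c, rfl⟩
    rw [map_mul, substAB_diff, zero_mul]
  · intro h0
    have := substAB_dvd_sub a b p
    rwa [h0, sub_zero] at this

lemma prime_diff {a b : Fin n} (hab : a ≠ b) :
    Prime (X a - X b : MvPolynomial (Fin n) ℂ) := by
  refine ⟨sub_ne_zero.mpr (fun e => hab (X_injective e)), ?_, ?_⟩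
  · intro hu
    have := hu.map (substAB a b)
    rw [substAB_diff] at this
    exact not_isUnit_zero this
  · intro p q hpq
    rw [diff_dvd_iff] at hpq ⊢
    rw [diff_dvd_iff (a := a) (b := b) q]
    rw [map_mul] at hpq
    rcases mul_eq_zero.mp hpq with h | h
    · exact Or.inl h
    · exact Or.inr h

lemma not_dvd_diff {a b c d : Fin n}
    (h : (if c = b then a else c) ≠ (if d = b then a else d)) :
    ¬ (X a - X b : MvPolynomial (Fin n) ℂ) ∣ (X c - X d) := by
  rw [diff_dvd_iff]
  intro h0
  apply h
  apply X_injective (R := ℂ)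
  have hc : substAB a b (X c : MvPolynomial (Fin n) ℂ)
      = X (if c = b then a else c) := by simp [substAB, apply_ite (X : Fin n → _)]
  have hd : substAB a b (X d : MvPolynomial (Fin n) ℂ)
      = X (if d = b then a else d) := by simp [substAB, apply_ite (X : Fin n → _)]
  rw [map_sub, hc, hd, sub_eq_zero] at h0
  exact h0

lemma key_L (w : Equiv.Perm (Fin n)) (i j d dp : Fin n) (hji : j < i) (hddp : d < dp) :
    (X (w i) - X (w j) : MvPolynomial (Fin n) ℂ) ∣
      ((X (w dp) - X (w d)) - (X ((w * Equiv.swap i j) dp) - X ((w * Equiv.swap i j) d))) := by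
  have hij : i ≠ j := hji.ne'
  simp only [Equiv.Perm.mul_apply]
  by_cases hdpi : dp = i
  · subst hdpi
    rw [Equiv.swap_apply_left]
    by_cases hdj : d = j
    · subst hdj
      rw [Equiv.swap_apply_right]
      exact ⟨2, by ring⟩
    · rw [Equiv.swap_apply_of_ne_of_ne hddp.ne hdj]
      exact ⟨1, by ring⟩
  · by_cases hdpj : dp = j
    · subst hdpj
      rw [Equiv.swap_apply_right,
        Equiv.swap_apply_of_ne_of_ne (hddp.trans hji).ne hddp.ne]
      exact ⟨-1, by ring⟩
    · rw [Equiv.swap_apply_of_ne_of_ne hdpi hdpj]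
      by_cases hdi : d = i
      · subst hdi
        rw [Equiv.swap_apply_left]
        exact ⟨-1, by ring⟩
      · by_cases hdj : d = j
        · subst hdj
          rw [Equiv.swap_apply_right]
          exact ⟨1, by ring⟩
        · rw [Equiv.swap_apply_of_ne_of_ne hdi hdj]
          exact ⟨0, by ring⟩


lemma key_oG (h hm : Fin n → Fin n) (d₀ d dp dm : Fin n)
    (hle : ∀ j, j ≤ h j)
    (hd₀d : d₀ < d) (hdp : (dp : ℕ) = (d : ℕ) + 1) (hdm : (dm : ℕ) + 1 = (d : ℕ))
    (hcol : h d = h dp) (hinv : ∀ j, h j = d ↔ j = d₀)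
    (hhm : hm = Function.update h d₀ dm)
    {f : Equiv.Perm (Fin n) → MvPolynomial (Fin n) ℂ} (hf : f ∈ HToG n hm d₀ dp)
    (w : Equiv.Perm (Fin n)) (i j : Fin n) (hji : j < i) (hij : i ≤ h j) :
    (X (w i) - X (w j)) ∣
      (f (w * Equiv.swap d dp) - f (w * Equiv.swap i j * Equiv.swap d dp)) := by
  have hddp : d < dp := by rw [Fin.lt_def]; omega
  have hd0dp : d₀ < dp := hd₀d.trans hddp
  have hmd : hm d = h d := by rw [hhm]; exact Function.update_of_ne hd₀d.ne' dm h
  have hmdp : hm dp = h dp := by rw [hhm]; exact Function.update_of_ne hd0dp.ne' dm h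
  have hdphd : dp ≤ h d := hcol ▸ hle dp
  have hhd0 : h d₀ = d := (hinv d₀).mpr rfl
  rw [mul_assoc, Equiv.swap_mul_eq_mul_swap, ← mul_assoc, Equiv.swap_inv]
  set v := w * Equiv.swap d dp with hv
  have hvv : ∀ x, v (Equiv.swap d dp x) = w x := by
    intro x
    rw [hv, Equiv.Perm.mul_apply, Equiv.swap_apply_self]
  rw [← hvv i, ← hvv j]
  -- helper for applying the edge condition with the divisor reversed
  have hrev : ∀ (p q : Fin n), q < p → (p ≤ hm q ∨ (p = dp ∧ q = d₀)) →
      (X (v q) - X (v p)) ∣ (f v - f (v * Equiv.swap q p)) := by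
    intro p q hqp he
    rw [Equiv.swap_comm q p, show (X (v q) - X (v p) : MvPolynomial (Fin n) ℂ)
      = -(X (v p) - X (v q)) by ring, neg_dvd]
    exact hf v p q hqp he
  by_cases hidp : i = dp
  · have e1 : Equiv.swap d dp i = d := by rw [hidp, Equiv.swap_apply_right]
    rw [e1]
    by_cases hjd : j = d
    · have e2 : Equiv.swap d dp j = dp := by rw [hjd, Equiv.swap_apply_left]
      rw [e2]
      exact hrev dp d hddp (Or.inl (hmd ▸ hdphd))
    · -- j < d, j ≠ d₀ (else dp ≤ h d₀ = d, contradiction)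
      have hjdp : j ≠ dp := hidp ▸ hji.ne
      have hjd' : j < d := by
        rw [Fin.lt_def]
        have h1 : (j : ℕ) < (i : ℕ) := hji
        have h2 : (i : ℕ) = (dp : ℕ) := by rw [hidp]
        have := Fin.val_ne_of_ne hjd
        omega
      have hjd0 : j ≠ d₀ := by
        intro hj
        have : i ≤ h d₀ := hj ▸ hij
        rw [hhd0] at this
        have h1 : (i : ℕ) ≤ (d : ℕ) := this
        have h2 : (i : ℕ) = (dp : ℕ) := by rw [hidp]
        omega
      have e2 : Equiv.swap d dp j = j := Equiv.swap_apply_of_ne_of_ne hjd hjdp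
      rw [e2]
      have hmj : hm j = h j := by rw [hhm]; exact Function.update_of_ne hjd0 dm h
      refine hf v d j hjd' (Or.inl ?_)
      rw [hmj]
      have h1 : (i : ℕ) ≤ (h j : ℕ) := hij
      have h2 : (i : ℕ) = (dp : ℕ) := by rw [hidp]
      rw [Fin.le_def]
      omega
  · by_cases hjdp : j = dp
    · -- j = dp, i > dp
      have hdi : d < i := by
        rw [Fin.lt_def]
        have h1 : (j : ℕ) < (i : ℕ) := hji
        have h2 : (j : ℕ) = (dp : ℕ) := by rw [hjdp]
        omega
      have hid : i ≠ d := hdi.ne'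
      have e1 : Equiv.swap d dp i = i := Equiv.swap_apply_of_ne_of_ne hid hidp
      have e2 : Equiv.swap d dp j = d := by rw [hjdp, Equiv.swap_apply_right]
      rw [e1, e2]
      refine hf v i d hdi (Or.inl ?_)
      rw [hmd, hcol, ← hjdp]
      exact hij
    · by_cases hid : i = d
      · -- i = d, j < d
        have hjd : j ≠ d := hid ▸ hji.ne
        have e1 : Equiv.swap d dp i = dp := by rw [hid, Equiv.swap_apply_left]
        have e2 : Equiv.swap d dp j = j := Equiv.swap_apply_of_ne_of_ne hjd hjdp
        rw [e1, e2]
        have hjlt : j < dp := hji.trans (hid ▸ hddp : i < dp)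
        by_cases hjd0 : j = d₀
        · exact hf v dp j hjlt (Or.inr ⟨rfl, hjd0⟩)
        · have hmj : hm j = h j := by rw [hhm]; exact Function.update_of_ne hjd0 dm h
          refine hf v dp j hjlt (Or.inl ?_)
          have hne : h j ≠ d := fun e => hjd0 ((hinv j).mp e)
          rw [hmj]
          have h1 : (i : ℕ) ≤ (h j : ℕ) := hij
          have h2 : (i : ℕ) = (d : ℕ) := by rw [hid]
          have h3 := Fin.val_ne_of_ne hne
          rw [Fin.le_def]
          omega
      · by_cases hjd : j = d
        · -- j = d, i > dp (i ≠ dp)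
          have hidp2 : dp < i := by
            rw [Fin.lt_def]
            have h1 : (j : ℕ) < (i : ℕ) := hji
            have h2 : (j : ℕ) = (d : ℕ) := by rw [hjd]
            have := Fin.val_ne_of_ne hidp
            omega
          have e1 : Equiv.swap d dp i = i := Equiv.swap_apply_of_ne_of_ne hid hidp
          have e2 : Equiv.swap d dp j = dp := by rw [hjd, Equiv.swap_apply_left]
          rw [e1, e2]
          refine hf v i dp hidp2 (Or.inl ?_)
          rw [hmdp, ← hcol, ← hjd]
          exact hij
        · -- disjoint case
          have e1 : Equiv.swap d dp i = i := Equiv.swap_apply_of_ne_of_ne hid hidp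
          have e2 : Equiv.swap d dp j = j := Equiv.swap_apply_of_ne_of_ne hjd hjdp
          rw [e1, e2]
          by_cases hjd0 : j = d₀
          · have hiled : (i : ℕ) ≤ (d : ℕ) := by
              have : i ≤ h d₀ := hjd0 ▸ hij
              rw [hhd0] at this
              exact this
            have : i ≤ hm j := by
              rw [hhm, hjd0, Function.update_self, Fin.le_def]
              have := Fin.val_ne_of_ne hid
              omega
            exact hf v i j hji (Or.inl this)
          · have hmj : hm j = h j := by rw [hhm]; exact Function.update_of_ne hjd0 dm h
            exact hf v i j hji (Or.inl (hmj ▸ hij))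

/-- `φ + ψ_! : H*_T(°G) ⊕ H*_T(G) → H*_T(G̃, s)` is an isomorphism of
`ℂ[t₁,…,tₙ]`-modules: it is well defined, injective and surjective
(the map is `ℂ[t₁,…,tₙ]`-linear by construction). -/
theorem phiPsi_isomorphism (n : ℕ) (h hm hp : Fin n → Fin n) (d₀ d dp dm : Fin n)
    (hmono : Monotone h) (hle : ∀ j, j ≤ h j)
    (hd₀d : d₀ < d) (hdp : (dp : ℕ) = (d : ℕ) + 1) (hdm : (dm : ℕ) + 1 = (d : ℕ))
    (hcol : h d = h dp) (hinv : ∀ j, h j = d ↔ j = d₀)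
    (hhm : hm = Function.update h d₀ dm) (hhp : hp = Function.update h d₀ dp)
    :
    (∀ f ∈ HToG n hm d₀ dp, ∀ g ∈ HTX n h,
      phiPsi n d dp f g ∈ HTtilde n h hm d₀ d dp) ∧
    (∀ f ∈ HToG n hm d₀ dp, ∀ f' ∈ HToG n hm d₀ dp,
      ∀ g ∈ HTX n h, ∀ g' ∈ HTX n h,
        phiPsi n d dp f g = phiPsi n d dp f' g' → f = f' ∧ g = g') ∧
    (∀ F ∈ HTtilde n h hm d₀ d dp,
      ∃ f ∈ HToG n hm d₀ dp, ∃ g ∈ HTX n h, F = phiPsi n d dp f g) := by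
  have hddp : d < dp := by rw [Fin.lt_def]; omega
  have hd0dp : d₀ < dp := hd₀d.trans hddp
  have hmd : hm d = h d := by rw [hhm]; exact Function.update_of_ne hd₀d.ne' dm h
  have hdphd : dp ≤ h d := hcol ▸ hle dp
  have hdphmd : dp ≤ hm d := hmd ▸ hdphd
  have hLne : ∀ w : Equiv.Perm (Fin n),
      (X (w dp) - X (w d) : MvPolynomial (Fin n) ℂ) ≠ 0 := fun w =>
    sub_ne_zero.mpr (fun e => hddp.ne' (w.injective (X_injective e)))
  have hwtt : ∀ w : Equiv.Perm (Fin n),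
      w * Equiv.swap d dp * Equiv.swap d dp = w := fun w => by
    rw [mul_assoc, Equiv.swap_mul_self, mul_one]
  have hvdp : ∀ w : Equiv.Perm (Fin n), (w * Equiv.swap d dp) dp = w d := fun w => by
    rw [Equiv.Perm.mul_apply, Equiv.swap_apply_right]
  have hvd : ∀ w : Equiv.Perm (Fin n), (w * Equiv.swap d dp) d = w dp := fun w => by
    rw [Equiv.Perm.mul_apply, Equiv.swap_apply_left]
  refine ⟨?_, ?_, ?_⟩
  · -- well-definedness
    intro f hf g hg
    simp only [HTtilde, Set.mem_setOf_eq]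
    refine ⟨?_, ?_, ?_, ?_⟩
    · intro w i j hji hij
      simp only [phiPsi, Sum.elim_inl]
      obtain ⟨a1, ha1⟩ :=
        key_oG h hm d₀ d dp dm hle hd₀d hdp hdm hcol hinv hhm hf w i j hji hij
      obtain ⟨a2, ha2⟩ := hg w i j hji hij
      obtain ⟨a3, ha3⟩ := key_L w i j d dp hji hddp
      exact ⟨a1 + (X (w dp) - X (w d)) * a2 + a3 * g (w * Equiv.swap i j),
        by linear_combination ha1 + (X (w dp) - X (w d)) * ha2
          + g (w * Equiv.swap i j) * ha3⟩
    · intro w i j hji he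
      simp only [phiPsi, Sum.elim_inr]
      exact hf w i j hji he
    · intro w
      simp only [phiPsi, Sum.elim_inl, Sum.elim_inr]
      have h1 := hf w dp d hddp (Or.inl hdphmd)
      rw [Equiv.swap_comm dp d] at h1
      obtain ⟨a, ha⟩ := h1
      exact ⟨-a + g w, by linear_combination -ha⟩
    · intro w
      simp only [phiPsi, Sum.elim_inl, Sum.elim_inr]
      obtain ⟨c, hc⟩ := hg w dp d hddp hdphd
      rw [Equiv.swap_comm dp d] at hc
      refine ⟨c, ?_⟩
      rw [hwtt w, hvdp w, hvd w]
      linear_combination (X (w dp) - X (w d) : MvPolynomial (Fin n) ℂ) * hc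
  · -- injectivity
    intro f hf f' hf' g hg g' hg' heq
    have hfe : f = f' := by
      funext w
      have := congrFun heq (Sum.inr w)
      simpa [phiPsi] using this
    refine ⟨hfe, ?_⟩
    funext w
    have h1 := congrFun heq (Sum.inl w)
    simp only [phiPsi, Sum.elim_inl] at h1
    rw [hfe] at h1
    have h2 : (X (w dp) - X (w d) : MvPolynomial (Fin n) ℂ) * g w
        = (X (w dp) - X (w d)) * g' w := by linear_combination h1
    exact mul_left_cancel₀ (hLne w) h2
  · -- surjectivity
    intro F hF
    simp only [HTtilde, Set.mem_setOf_eq] at hF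
    obtain ⟨hF1, hF2, hF3, hF4⟩ := hF
    have hLA : ∀ w : Equiv.Perm (Fin n), ∃ c,
        F (Sum.inl w) - F (Sum.inr (w * Equiv.swap d dp))
          = (X (w dp) - X (w d)) * c := by
      intro w
      have h2 := hF2 w dp d hddp (Or.inl hdphmd)
      rw [Equiv.swap_comm dp d] at h2
      obtain ⟨a, ha⟩ := hF3 w
      obtain ⟨b, hb⟩ := h2
      exact ⟨a + b, by linear_combination ha + hb⟩
    choose g hgs using hLA
    have hgmem : g ∈ HTX n h := by
      simp only [HTX, Set.mem_setOf_eq]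
      intro w i j hji hij
      have hDL : (X (w i) - X (w j) : MvPolynomial (Fin n) ℂ) ∣
          (X (w dp) - X (w d)) * (g w - g (w * Equiv.swap i j)) := by
        obtain ⟨b1, hb1⟩ := hF1 w i j hji hij
        obtain ⟨b2, hb2⟩ :=
          key_oG h hm d₀ d dp dm hle hd₀d hdp hdm hcol hinv hhm
            (f := fun v => F (Sum.inr v)) hF2 w i j hji hij
        obtain ⟨b3, hb3⟩ := key_L w i j d dp hji hddp
        have hsw := hgs w
        have hss := hgs (w * Equiv.swap i j)
        exact ⟨b1 - b2 - b3 * g (w * Equiv.swap i j),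
          by linear_combination (-1 : MvPolynomial (Fin n) ℂ) * hsw + hss + hb1 - hb2
            - g (w * Equiv.swap i j) * hb3⟩
      by_cases hcase : i = dp ∧ j = d
      · obtain ⟨hi, hj⟩ := hcase
        rw [hi, hj, Equiv.swap_comm dp d]
        obtain ⟨c, hc4⟩ := hF4 w
        have hsw := hgs w
        have hs2 := hgs (w * Equiv.swap d dp)
        rw [hwtt w, hvdp w, hvd w] at hs2
        refine ⟨c, mul_left_cancel₀ (hLne w) ?_⟩
        linear_combination (-1 : MvPolynomial (Fin n) ℂ) * hsw - hs2 + hc4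
      · have hwij : w i ≠ w j := fun e => hji.ne' (w.injective e)
        have hp := prime_diff hwij
        have hnd : ¬ (X (w i) - X (w j) : MvPolynomial (Fin n) ℂ)
            ∣ (X (w dp) - X (w d)) := by
          apply not_dvd_diff
          simp only [EmbeddingLike.apply_eq_iff_eq]
          by_cases h1 : d = j
          · have hdpj : ¬ dp = j := fun e => hddp.ne (h1 ▸ e ▸ rfl)
            rw [if_pos h1, if_neg hdpj]
            have hidp : i ≠ dp := fun e => hcase ⟨e, h1.symm⟩
            exact fun e => hidp (w.injective e).symm
          · rw [if_neg h1]
            by_cases h2 : dp = j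
            · rw [if_pos h2]
              have hdi : d < i := lt_trans (h2 ▸ hddp) hji
              exact fun e => hdi.ne' (w.injective e)
            · rw [if_neg h2]
              exact fun e => hddp.ne' (w.injective e)
        rcases hp.2.2 _ _ hDL with hdvd | hdvd
        · exact absurd hdvd hnd
        · exact hdvd
    refine ⟨fun w => F (Sum.inr w), hF2, g, hgmem, ?_⟩
    funext x
    cases x with
    | inl w =>
        simp only [phiPsi, Sum.elim_inl]
        linear_combination hgs w
    | inr w => simp [phiPsi]

end AuxPhiPsi
end

section
/- The homomorphism η + ρ_! : H*_T(G_+) ⊕ H*_T(G_-) → H*_T(G̃, s), (f_+, f_-) ↦ η(f_+) + ρ_!(f_-), is an isomorphism of ℂ[t_1,...,t_n]-modules, where η(f)(w) = η(f)(°w) = f(w), ρ_!(f)(w) = (t_{w(d)} − t_{w(d_0)})·f(w), ρ_!(f)(°w) = (t_{w(d+1)} − t_{w(d_0)})·f(w). -/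
open MvPolynomial

/-- The combined map `(f₊, f₋) ↦ η(f₊) + ρ_!(f₋)`:
`(η(f₊)+ρ_!(f₋))(w) = f₊(w) + (t_{w(d)} − t_{w(d₀)})·f₋(w)`,
`(η(f₊)+ρ_!(f₋))(°w) = f₊(w) + (t_{w(d+1)} − t_{w(d₀)})·f₋(w)`. -/
noncomputable def etaRho (n : ℕ) (d₀ d dp : Fin n)
    (fp fm : Equiv.Perm (Fin n) → MvPolynomial (Fin n) ℂ) :
    Equiv.Perm (Fin n) ⊕ Equiv.Perm (Fin n) → MvPolynomial (Fin n) ℂ :=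
  Sum.elim (fun w => fp w + (X (w d) - X (w d₀)) * fm w)
           (fun w => fp w + (X (w dp) - X (w d₀)) * fm w)

/- ==== auxiliary lemmas ==== -/

noncomputable def phiAB {n : ℕ} (a b : Fin n) :
    MvPolynomial (Fin n) ℂ →ₐ[ℂ] MvPolynomial (Fin n) ℂ :=
  aeval (fun i => if i = a then X b else X i)

lemma phiAB_X {n : ℕ} (a b c : Fin n) :
    phiAB a b (X c) = if c = a then X b else X c := by
  simp [phiAB]

lemma dvd_sub_phiAB {n : ℕ} (a b : Fin n) (q : MvPolynomial (Fin n) ℂ) :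
    (X a - X b) ∣ (q - phiAB a b q) := by
  induction q using MvPolynomial.induction_on with
  | C c => simp
  | add p q hp hq =>
      have : p + q - phiAB a b (p + q) = (p - phiAB a b p) + (q - phiAB a b q) := by
        rw [map_add]; ring
      rw [this]; exact dvd_add hp hq
  | mul_X p i hp =>
      have : p * X i - phiAB a b (p * X i)
          = (p - phiAB a b p) * X i + phiAB a b p * (X i - phiAB a b (X i)) := by
        rw [map_mul]; ring
      rw [this]
      refine dvd_add (Dvd.dvd.mul_right hp _) (Dvd.dvd.mul_left ?_ _)
      rw [phiAB_X]
      by_cases h : i = a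
      · simp [h]
      · simp [h]

lemma phiAB_eq_zero_iff {n : ℕ} {a b : Fin n} (hab : a ≠ b)
    (q : MvPolynomial (Fin n) ℂ) : phiAB a b q = 0 ↔ (X a - X b) ∣ q := by
  constructor
  · intro h
    have := dvd_sub_phiAB a b q
    rwa [h, sub_zero] at this
  · rintro ⟨r, rfl⟩
    rw [map_mul, map_sub, phiAB_X, phiAB_X, if_pos rfl, if_neg (Ne.symm hab), sub_self,
      zero_mul]

lemma X_sub_X_ne_zero {n : ℕ} {a b : Fin n} (hab : a ≠ b) :
    (X a - X b : MvPolynomial (Fin n) ℂ) ≠ 0 :=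
  sub_ne_zero.mpr (fun h => hab (MvPolynomial.X_injective h))

lemma prime_X_sub_X {n : ℕ} {a b : Fin n} (hab : a ≠ b) :
    Prime (X a - X b : MvPolynomial (Fin n) ℂ) := by
  refine ⟨X_sub_X_ne_zero hab, ?_, ?_⟩
  · intro hu
    have h0 : phiAB a b (X a - X b) = 0 := by
      rw [map_sub, phiAB_X, phiAB_X, if_pos rfl, if_neg (Ne.symm hab), sub_self]
    have := hu.map (phiAB a b)
    rw [h0] at this
    exact not_isUnit_zero this
  · intro x y hxy
    rw [← phiAB_eq_zero_iff hab (x * y), map_mul] at hxy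
    rcases mul_eq_zero.mp hxy with h | h
    · exact Or.inl ((phiAB_eq_zero_iff hab x).mp h)
    · exact Or.inr ((phiAB_eq_zero_iff hab y).mp h)

lemma not_dvd_X_sub_X {n : ℕ} {a b c d : Fin n} (hab : a ≠ b) (hcd : c ≠ d)
    (h1 : ¬(c = a ∧ d = b)) (h2 : ¬(c = b ∧ d = a)) :
    ¬ (X a - X b : MvPolynomial (Fin n) ℂ) ∣ (X c - X d) := by
  rw [← phiAB_eq_zero_iff hab, map_sub, phiAB_X, phiAB_X]
  by_cases hc : c = a <;> by_cases hd : d = a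
  · exact absurd (hc.trans hd.symm) hcd
  · rw [if_pos hc, if_neg hd]
    exact X_sub_X_ne_zero (fun h : b = d => h1 ⟨hc, h.symm⟩)
  · rw [if_neg hc, if_pos hd]
    exact X_sub_X_ne_zero (fun h : c = b => h2 ⟨h, hd⟩)
  · rw [if_neg hc, if_neg hd]
    exact X_sub_X_ne_zero hcd

lemma swap_apply_dvd {n : ℕ} (w : Equiv.Perm (Fin n)) (i j k : Fin n) :
    (X (w i) - X (w j) : MvPolynomial (Fin n) ℂ) ∣
      (X (w k) - X ((w * Equiv.swap i j) k)) := by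
  rcases eq_or_ne k i with rfl | hki
  · simp [Equiv.Perm.mul_apply, Equiv.swap_apply_left]
  rcases eq_or_ne k j with rfl | hkj
  · simp only [Equiv.Perm.mul_apply, Equiv.swap_apply_right]
    exact ⟨-1, by ring⟩
  · simp [Equiv.Perm.mul_apply, Equiv.swap_apply_of_ne_of_ne hki hkj]

lemma label_diff_dvd {n : ℕ} (w : Equiv.Perm (Fin n)) (i j a b : Fin n) :
    (X (w i) - X (w j) : MvPolynomial (Fin n) ℂ) ∣
      ((X (w a) - X (w b))
        - (X ((w * Equiv.swap i j) a) - X ((w * Equiv.swap i j) b))) := by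
  have h1 := swap_apply_dvd w i j a
  have h2 := swap_apply_dvd w i j b
  have key : (X (w a) - X (w b))
        - (X ((w * Equiv.swap i j) a) - X ((w * Equiv.swap i j) b))
      = (X (w a) - X ((w * Equiv.swap i j) a))
        - ((X (w b) : MvPolynomial (Fin n) ℂ) - X ((w * Equiv.swap i j) b)) := by ring
  rw [key]
  exact dvd_sub h1 h2

/-- `η + ρ_! : H*_T(G₊) ⊕ H*_T(G₋) → H*_T(G̃, s)` is an isomorphism of
`ℂ[t₁,…,tₙ]`-modules: it is well defined, injective and surjective
(the map is `ℂ[t₁,…,tₙ]`-linear by construction). -/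
theorem etaRho_isomorphism (n : ℕ) (h hm hp : Fin n → Fin n) (d₀ d dp dm : Fin n)
    (hmono : Monotone h) (hle : ∀ j, j ≤ h j)
    (hd₀d : d₀ < d) (hdp : (dp : ℕ) = (d : ℕ) + 1) (hdm : (dm : ℕ) + 1 = (d : ℕ))
    (hcol : h d = h dp) (hinv : ∀ j, h j = d ↔ j = d₀)
    (hhm : hm = Function.update h d₀ dm) (hhp : hp = Function.update h d₀ dp)
    :
    (∀ fp ∈ HTX n hp, ∀ fm ∈ HTX n hm,
      etaRho n d₀ d dp fp fm ∈ HTtilde n h hm d₀ d dp) ∧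
    (∀ fp ∈ HTX n hp, ∀ fp' ∈ HTX n hp,
      ∀ fm ∈ HTX n hm, ∀ fm' ∈ HTX n hm,
        etaRho n d₀ d dp fp fm = etaRho n d₀ d dp fp' fm' → fp = fp' ∧ fm = fm') ∧
    (∀ F ∈ HTtilde n h hm d₀ d dp,
      ∃ fp ∈ HTX n hp, ∃ fm ∈ HTX n hm, F = etaRho n d₀ d dp fp fm) := by
  -- basic `Fin` facts
  have hd_lt_dp : d < dp := Fin.lt_def.mpr (by omega)
  have hdm_lt_d : dm < d := Fin.lt_def.mpr (by omega)
  have hd₀_lt_dp : d₀ < dp := hd₀d.trans hd_lt_dp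
  have hd_ne_d₀ : d ≠ d₀ := hd₀d.ne'
  have hdp_ne_d₀ : dp ≠ d₀ := hd₀_lt_dp.ne'
  have hdp_ne_d : dp ≠ d := hd_lt_dp.ne'
  have hd₀_ne_d : d₀ ≠ d := hd₀d.ne
  have hd₀_ne_dp : d₀ ≠ dp := hd₀_lt_dp.ne
  have hhd₀ : h d₀ = d := (hinv d₀).mpr rfl
  have hm_d₀ : hm d₀ = dm := by rw [hhm, Function.update_self]
  have hp_d₀ : hp d₀ = dp := by rw [hhp, Function.update_self]
  have hm_ne : ∀ j, j ≠ d₀ → hm j = h j := by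
    intro j hj; rw [hhm, Function.update_of_ne hj]
  have hp_ne : ∀ j, j ≠ d₀ → hp j = h j := by
    intro j hj; rw [hhp, Function.update_of_ne hj]
  have hm_le_h : ∀ j, hm j ≤ h j := by
    intro j
    by_cases hj : j = d₀
    · subst hj; rw [hm_d₀, hhd₀]; exact hdm_lt_d.le
    · rw [hm_ne j hj]
  have h_le_hp : ∀ j, h j ≤ hp j := by
    intro j
    by_cases hj : j = d₀
    · subst hj; rw [hp_d₀, hhd₀]; exact hd_lt_dp.le
    · rw [hp_ne j hj]
  have hm_le_hp : ∀ j, hm j ≤ hp j := fun j => (hm_le_h j).trans (h_le_hp j)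
  have hd_lt_hd : d < h d :=
    lt_of_le_of_ne (hle d) (fun e => hd₀d.ne' ((hinv d).mp e.symm))
  have hdp_le_hd : dp ≤ h d := Fin.le_def.mpr (by
    have := Fin.lt_def.mp hd_lt_hd; omega)
  have hdp_le_hm_d : dp ≤ hm d := by rw [hm_ne d hd_ne_d₀]; exact hdp_le_hd
  -- edge classifications
  have hclass : ∀ i j : Fin n, i ≤ h j → i ≤ hm j ∨ (i = d ∧ j = d₀) := by
    intro i j hij
    by_cases hj : j = d₀
    · subst hj; rw [hhd₀] at hij
      rcases eq_or_lt_of_le hij with he | hlt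
      · exact Or.inr ⟨he, rfl⟩
      · left; rw [hm_d₀]
        exact Fin.le_def.mpr (by have := Fin.lt_def.mp hlt; omega)
    · left; rw [hm_ne j hj]; exact hij
  have hclassp : ∀ i j : Fin n, i ≤ hp j →
      i ≤ hm j ∨ (i = d ∧ j = d₀) ∨ (i = dp ∧ j = d₀) := by
    intro i j hij
    by_cases hj : j = d₀
    · subst hj; rw [hp_d₀] at hij
      have hij' := Fin.le_def.mp hij
      rcases Nat.lt_trichotomy (i : ℕ) (d : ℕ) with h1 | h1 | h1
      · left; rw [hm_d₀]; exact Fin.le_def.mpr (by omega)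
      · exact Or.inr (Or.inl ⟨Fin.val_injective h1, rfl⟩)
      · refine Or.inr (Or.inr ⟨Fin.val_injective ?_, rfl⟩); omega
    · left; rw [hm_ne j hj, ← hp_ne j hj]; exact hij
  refine ⟨?_, ?_, ?_⟩
  · -- well-definedness
    intro fp hfp fm hfm
    refine ⟨?_, ?_, ?_, ?_⟩
    · -- condition on `G`
      intro w i j hji hij
      simp only [etaRho, Sum.elim_inl]
      rcases hclass i j hij with hij' | ⟨hi, hj⟩
      · have d1 := hfp w i j hji (hij.trans (h_le_hp j))
        have d2 := dvd_mul_sub_mul (label_diff_dvd w i j d d₀) (hfm w i j hji hij')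
        have key : fp w + (X (w d) - X (w d₀)) * fm w
              - (fp (w * Equiv.swap i j)
                + (X ((w * Equiv.swap i j) d) - X ((w * Equiv.swap i j) d₀))
                  * fm (w * Equiv.swap i j))
            = (fp w - fp (w * Equiv.swap i j))
              + ((X (w d) - X (w d₀)) * fm w
                - (X ((w * Equiv.swap i j) d) - X ((w * Equiv.swap i j) d₀))
                  * fm (w * Equiv.swap i j)) := by ring
        rw [key]
        exact dvd_add d1 d2
      · -- the edge (d, d₀)
        rw [hi, hj]
        have hσd : (w * Equiv.swap d d₀) d = w d₀ := by
          simp [Equiv.Perm.mul_apply]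
        have hσd₀ : (w * Equiv.swap d d₀) d₀ = w d := by
          simp [Equiv.Perm.mul_apply]
        rw [hσd, hσd₀]
        obtain ⟨c, hc⟩ := hfp w d d₀ hd₀d (by rw [hp_d₀]; exact hd_lt_dp.le)
        exact ⟨c + fm w + fm (w * Equiv.swap d d₀), by linear_combination hc⟩
    · -- condition on `°G`
      intro w i j hji hij
      simp only [etaRho, Sum.elim_inr]
      rcases hij with hij' | ⟨hi, hj⟩
      · have d1 := hfp w i j hji (hij'.trans (hm_le_hp j))
        have d2 := dvd_mul_sub_mul (label_diff_dvd w i j dp d₀) (hfm w i j hji hij')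
        have key : fp w + (X (w dp) - X (w d₀)) * fm w
              - (fp (w * Equiv.swap i j)
                + (X ((w * Equiv.swap i j) dp) - X ((w * Equiv.swap i j) d₀))
                  * fm (w * Equiv.swap i j))
            = (fp w - fp (w * Equiv.swap i j))
              + ((X (w dp) - X (w d₀)) * fm w
                - (X ((w * Equiv.swap i j) dp) - X ((w * Equiv.swap i j) d₀))
                  * fm (w * Equiv.swap i j)) := by ring
        rw [key]
        exact dvd_add d1 d2
      · -- the edge (dp, d₀)
        rw [hi, hj]
        have hσdp : (w * Equiv.swap dp d₀) dp = w d₀ := by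
          simp [Equiv.Perm.mul_apply]
        have hσd₀ : (w * Equiv.swap dp d₀) d₀ = w dp := by
          simp [Equiv.Perm.mul_apply]
        rw [hσdp, hσd₀]
        obtain ⟨c, hc⟩ := hfp w dp d₀ hd₀_lt_dp (by rw [hp_d₀])
        exact ⟨c + fm w + fm (w * Equiv.swap dp d₀), by linear_combination hc⟩
    · -- vertical edges
      intro w
      simp only [etaRho, Sum.elim_inl, Sum.elim_inr]
      exact ⟨-fm w, by ring⟩
    · -- 4-gon condition
      intro w
      simp only [etaRho, Sum.elim_inl, Sum.elim_inr]
      have hτd : (w * Equiv.swap d dp) d = w dp := by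
        simp [Equiv.Perm.mul_apply]
      have hτdp : (w * Equiv.swap d dp) dp = w d := by
        simp [Equiv.Perm.mul_apply]
      have hτd₀ : (w * Equiv.swap d dp) d₀ = w d₀ := by
        simp [Equiv.Perm.mul_apply, Equiv.swap_apply_of_ne_of_ne hd₀_ne_d hd₀_ne_dp]
      rw [hτd, hτdp, hτd₀]
      have hedge := hfm w dp d hd_lt_dp hdp_le_hm_d
      rw [Equiv.swap_comm dp d] at hedge
      obtain ⟨c, hc⟩ := hedge
      exact ⟨-c, by linear_combination (-(X (w dp) - X (w d)) : MvPolynomial (Fin n) ℂ) * hc⟩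
  · -- injectivity
    intro fp hfp fp' hfp' fm hfm fm' hfm' heq
    have key : ∀ w, fm w = fm' w ∧ fp w = fp' w := by
      intro w
      have h1 := congrFun heq (Sum.inl w)
      have h2 := congrFun heq (Sum.inr w)
      simp only [etaRho, Sum.elim_inl, Sum.elim_inr] at h1 h2
      have hε : (X (w dp) - X (w d) : MvPolynomial (Fin n) ℂ) ≠ 0 :=
        X_sub_X_ne_zero (w.injective.ne hdp_ne_d)
      have h3 : (X (w dp) - X (w d)) * (fm w - fm' w) = 0 := by
        linear_combination h2 - h1
      have h4 : fm w = fm' w :=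
        sub_eq_zero.mp ((mul_eq_zero.mp h3).resolve_left hε)
      refine ⟨h4, ?_⟩
      rw [h4] at h1
      exact add_right_cancel h1
    exact ⟨funext fun w => (key w).2, funext fun w => (key w).1⟩
  · -- surjectivity
    intro F hF
    obtain ⟨c1, c2, c3, c4⟩ := hF
    have c3' : ∀ w : Equiv.Perm (Fin n), ∃ c,
        F (Sum.inl w) - F (Sum.inr w) = (X (w dp) - X (w d)) * c := c3
    choose q hq using c3'
    set fm : Equiv.Perm (Fin n) → MvPolynomial (Fin n) ℂ := fun w => -(q w) with hfm_def
    have hfm_spec : ∀ w, F (Sum.inr w) - F (Sum.inl w) = (X (w dp) - X (w d)) * fm w := by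
      intro w
      show F (Sum.inr w) - F (Sum.inl w) = (X (w dp) - X (w d)) * (-(q w))
      linear_combination - hq w
    set fp : Equiv.Perm (Fin n) → MvPolynomial (Fin n) ℂ :=
      fun w => F (Sum.inl w) - (X (w d) - X (w d₀)) * fm w with hfp_def
    have hfp_spec : ∀ w, fp w = F (Sum.inl w) - (X (w d) - X (w d₀)) * fm w :=
      fun w => rfl
    -- fm ∈ HTX n hm
    have hfmX : fm ∈ HTX n hm := by
      intro w i j hji hij
      by_cases hcase : i = dp ∧ j = d
      · obtain ⟨hi, hj⟩ := hcase
        rw [hi, hj]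
        have hc4 := c4 w
        rw [Equiv.swap_comm d dp] at hc4
        obtain ⟨c, hc⟩ := hc4
        have e1 := hfm_spec w
        have e2 := hfm_spec (w * Equiv.swap dp d)
        have hτdp : (w * Equiv.swap dp d) dp = w d := by
          simp [Equiv.Perm.mul_apply]
        have hτd : (w * Equiv.swap dp d) d = w dp := by
          simp [Equiv.Perm.mul_apply]
        rw [hτdp, hτd] at e2
        have hε : (X (w dp) - X (w d) : MvPolynomial (Fin n) ℂ) ≠ 0 :=
          X_sub_X_ne_zero (w.injective.ne hdp_ne_d)
        have hz : (X (w dp) - X (w d)) *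
            (fm w - fm (w * Equiv.swap dp d) - (X (w dp) - X (w d)) * (-c)) = 0 := by
          linear_combination - e1 - e2 - hc
        exact ⟨-c, sub_eq_zero.mp ((mul_eq_zero.mp hz).resolve_left hε)⟩
      · -- generic edge of `G₋`: coprimality argument
        have hwne : w i ≠ w j := w.injective.ne hji.ne'
        have pp := prime_X_sub_X hwne
        have hnd1 : ¬ (X (w i) - X (w j) : MvPolynomial (Fin n) ℂ) ∣
            (X (w dp) - X (w d)) := by
          refine not_dvd_X_sub_X hwne (w.injective.ne hdp_ne_d) ?_ ?_
          · rintro ⟨e1, e2⟩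
            exact hcase ⟨(w.injective e1).symm, (w.injective e2).symm⟩
          · rintro ⟨e1, e2⟩
            have h1 : dp = j := w.injective e1
            have h2 : d = i := w.injective e2
            rw [← h1, ← h2] at hji
            exact hd_lt_dp.asymm hji
        have hnd2 : ¬ (X (w i) - X (w j) : MvPolynomial (Fin n) ℂ) ∣
            (X ((w * Equiv.swap i j) dp) - X ((w * Equiv.swap i j) d)) := by
          refine not_dvd_X_sub_X hwne
            ((w * Equiv.swap i j).injective.ne hdp_ne_d) ?_ ?_
          · rintro ⟨e1, e2⟩
            have h1 : Equiv.swap i j dp = i := w.injective e1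
            have h2 : Equiv.swap i j d = j := w.injective e2
            have h1' : dp = j := by
              have := congrArg (Equiv.swap i j) h1
              rwa [Equiv.swap_apply_self, Equiv.swap_apply_left] at this
            have h2' : d = i := by
              have := congrArg (Equiv.swap i j) h2
              rwa [Equiv.swap_apply_self, Equiv.swap_apply_right] at this
            rw [← h1', ← h2'] at hji
            exact hd_lt_dp.asymm hji
          · rintro ⟨e1, e2⟩
            have h1 : Equiv.swap i j dp = j := w.injective e1
            have h2 : Equiv.swap i j d = i := w.injective e2
            have h1' : dp = i := by
              have := congrArg (Equiv.swap i j) h1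
              rwa [Equiv.swap_apply_self, Equiv.swap_apply_right] at this
            have h2' : d = j := by
              have := congrArg (Equiv.swap i j) h2
              rwa [Equiv.swap_apply_self, Equiv.swap_apply_left] at this
            exact hcase ⟨h1'.symm, h2'.symm⟩
        have d1 : (X (w i) - X (w j) : MvPolynomial (Fin n) ℂ) ∣
            ((F (Sum.inr w) - F (Sum.inr (w * Equiv.swap i j)))
              - (F (Sum.inl w) - F (Sum.inl (w * Equiv.swap i j)))) :=
          dvd_sub (c2 w i j hji (Or.inl hij)) (c1 w i j hji (hij.trans (hm_le_h j)))
        have d2 := label_diff_dvd w i j dp d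
        have key : (X (w i) - X (w j) : MvPolynomial (Fin n) ℂ) ∣
            (X (w dp) - X (w d)) *
              ((X ((w * Equiv.swap i j) dp) - X ((w * Equiv.swap i j) d)) *
                (fm w - fm (w * Equiv.swap i j))) := by
          have hiden : (X (w dp) - X (w d)) *
              ((X ((w * Equiv.swap i j) dp) - X ((w * Equiv.swap i j) d)) *
                (fm w - fm (w * Equiv.swap i j)))
            = (X ((w * Equiv.swap i j) dp) - X ((w * Equiv.swap i j) d)) *
                ((F (Sum.inr w) - F (Sum.inr (w * Equiv.swap i j)))
                  - (F (Sum.inl w) - F (Sum.inl (w * Equiv.swap i j))))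
              - ((X (w dp) - X (w d))
                  - (X ((w * Equiv.swap i j) dp) - X ((w * Equiv.swap i j) d))) *
                  (F (Sum.inr (w * Equiv.swap i j)) - F (Sum.inl (w * Equiv.swap i j))) := by
            linear_combination
              (-(X ((w * Equiv.swap i j) dp) - X ((w * Equiv.swap i j) d))) * hfm_spec w
              + (X (w dp) - X (w d)) * hfm_spec (w * Equiv.swap i j)
          rw [hiden]
          exact dvd_sub (d1.mul_left _) (d2.mul_right _)
        rcases pp.dvd_mul.mp key with hbad | hrest
        · exact absurd hbad hnd1
        rcases pp.dvd_mul.mp hrest with hbad | hgood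
        · exact absurd hbad hnd2
        exact hgood
    -- fp ∈ HTX n hp
    have hfpX : fp ∈ HTX n hp := by
      intro w i j hji hij
      rw [hfp_spec w, hfp_spec (w * Equiv.swap i j)]
      rcases hclassp i j hij with hij' | ⟨hi, hj⟩ | ⟨hi, hj⟩
      · have d1 := c1 w i j hji (hij'.trans (hm_le_h j))
        have d2 := dvd_mul_sub_mul (label_diff_dvd w i j d d₀) (hfmX w i j hji hij')
        have key : F (Sum.inl w) - (X (w d) - X (w d₀)) * fm w
              - (F (Sum.inl (w * Equiv.swap i j))
                - (X ((w * Equiv.swap i j) d) - X ((w * Equiv.swap i j) d₀))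
                  * fm (w * Equiv.swap i j))
            = (F (Sum.inl w) - F (Sum.inl (w * Equiv.swap i j)))
              - ((X (w d) - X (w d₀)) * fm w
                - (X ((w * Equiv.swap i j) d) - X ((w * Equiv.swap i j) d₀))
                  * fm (w * Equiv.swap i j)) := by ring
        rw [key]
        exact dvd_sub d1 d2
      · -- the edge (d, d₀)
        rw [hi, hj]
        have hσd : (w * Equiv.swap d d₀) d = w d₀ := by
          simp [Equiv.Perm.mul_apply]
        have hσd₀ : (w * Equiv.swap d d₀) d₀ = w d := by
          simp [Equiv.Perm.mul_apply]
        rw [hσd, hσd₀]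
        obtain ⟨c, hc⟩ := c1 w d d₀ hd₀d (le_of_eq hhd₀.symm)
        exact ⟨c - fm w - fm (w * Equiv.swap d d₀), by linear_combination hc⟩
      · -- the edge (dp, d₀)
        rw [hi, hj]
        have hσd : (w * Equiv.swap dp d₀) d = w d := by
          simp [Equiv.Perm.mul_apply, Equiv.swap_apply_of_ne_of_ne hdp_ne_d.symm hd_ne_d₀]
        have hσd₀ : (w * Equiv.swap dp d₀) d₀ = w dp := by
          simp [Equiv.Perm.mul_apply]
        have hσdp : (w * Equiv.swap dp d₀) dp = w d₀ := by
          simp [Equiv.Perm.mul_apply]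
        rw [hσd, hσd₀]
        obtain ⟨c, hc⟩ := c2 w dp d₀ hd₀_lt_dp (Or.inr ⟨rfl, rfl⟩)
        have s1 := hfm_spec w
        have s2 := hfm_spec (w * Equiv.swap dp d₀)
        rw [hσdp, hσd] at s2
        exact ⟨c - fm w - fm (w * Equiv.swap dp d₀), by linear_combination hc - s1 + s2⟩
    refine ⟨fp, hfpX, fm, hfmX, ?_⟩
    funext x
    cases x with
    | inl w =>
        simp only [etaRho, Sum.elim_inl, hfp_spec]
        ring
    | inr w =>
        simp only [etaRho, Sum.elim_inr, hfp_spec]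
        linear_combination hfm_spec w
end
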